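/- arXiv:2411.13567 — 15 statements merged into one kernel-verified Lean document; each statement's English description precedes it below -/
import Mathlib

section
/- For every real number p > 1 there exist a real number T > 0 and differentiable functions C, S : ℝ → ℝ such that for all t ∈ [0,T]: C'(t) = -S(t)^(p-1), S'(t) = C(t)^(p-1), 0 ≤ C(t) and 0 ≤ S(t); and moreover C(0) = 1, S(0) = 0 and C(T) = 0. -/
open Set Filter intervalIntegral MeasureTheory Real

/-- Glue lemma: if `f` has derivative `d y` at every `y ≠ x` near `x`, and `f`, `d` are
continuous at `x`, then `f` has derivative `d x` at `x`. -/
lemma hasDerivAt_of_eventually_ne {f d : ℝ → ℝ} {x : ℝ}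
    (h : ∀ᶠ y in nhdsWithin x {x}ᶜ, HasDerivAt f (d y) y)
    (hf : ContinuousAt f x) (hd : ContinuousAt d x) : HasDerivAt f (d x) x := by
  have hmem : {y | HasDerivAt f (d y) y} ∈ nhdsWithin x {x}ᶜ := h
  have hgt : {y | HasDerivAt f (d y) y} ∈ nhdsWithin x (Ioi x) :=
    nhdsWithin_mono x (fun y (hy : x < y) => ne_of_gt hy) hmem
  have hlt : {y | HasDerivAt f (d y) y} ∈ nhdsWithin x (Iio x) :=
    nhdsWithin_mono x (fun y (hy : y < x) => ne_of_lt hy) hmem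
  have A : HasDerivWithinAt f (d x) (Ici x) x := by
    refine hasDerivWithinAt_Ici_of_tendsto_deriv
      (s := {y | HasDerivAt f (d y) y} ∩ Ioi x)
      (fun y hy => (hy.1.differentiableAt).differentiableWithinAt)
      hf.continuousWithinAt
      (inter_mem hgt self_mem_nhdsWithin) ?_
    refine (hd.continuousWithinAt.tendsto).congr' ?_
    filter_upwards [hgt] with y hy using (hy.deriv).symm
  have B : HasDerivWithinAt f (d x) (Iic x) x := by
    refine hasDerivWithinAt_Iic_of_tendsto_deriv
      (s := {y | HasDerivAt f (d y) y} ∩ Iio x)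
      (fun y hy => (hy.1.differentiableAt).differentiableWithinAt)
      hf.continuousWithinAt
      (inter_mem hlt self_mem_nhdsWithin) ?_
    refine (hd.continuousWithinAt.tendsto).congr' ?_
    filter_upwards [hlt] with y hy using (hy.deriv).symm
  rw [← hasDerivWithinAt_univ, ← Set.Iic_union_Ici (a := x)]; exact B.union A

namespace Squig

variable (p : ℝ)

/-- integrand for the inverse of `sin_p` -/
noncomputable def g (u : ℝ) : ℝ := (1 - u ^ p) ^ (-(1 - p⁻¹))

/-- primitive: the inverse of `sin_p` -/
noncomputable def F (s : ℝ) : ℝ := ∫ u in (0:ℝ)..s, g p u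

variable {p}

lemma q_pos (hp : 1 < p) : 0 < 1 - p⁻¹ := by
  have : p⁻¹ < 1 := inv_lt_one_of_one_lt₀ hp
  linarith

lemma q_lt_one (hp : 1 < p) : 1 - p⁻¹ < 1 := by
  have : 0 < p⁻¹ := inv_pos.2 (by linarith)
  linarith

lemma p_pos (hp : 1 < p) : 0 < p := by linarith

lemma g_meas : Measurable (g p) :=
  (measurable_const.sub (measurable_id.pow measurable_const)).pow measurable_const

lemma g_nonneg (hp : 1 < p) {u : ℝ} (hu : u ∈ Icc (0:ℝ) 1) : 0 ≤ g p u := by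
  apply Real.rpow_nonneg
  have : u ^ p ≤ 1 := Real.rpow_le_one hu.1 hu.2 (p_pos hp).le
  linarith

lemma g_pos (hp : 1 < p) {u : ℝ} (hu0 : 0 ≤ u) (hu1 : u < 1) : 0 < g p u := by
  apply Real.rpow_pos_of_pos
  have : u ^ p < 1 := Real.rpow_lt_one hu0 hu1 (p_pos hp)
  linarith

lemma g_int (hp : 1 < p) : IntervalIntegrable (g p) volume 0 1 := by
  have hq1 : (-1 : ℝ) < -(1 - p⁻¹) := by have := q_lt_one hp; linarith
  have h0 : IntervalIntegrable (fun x : ℝ => x ^ (-(1 - p⁻¹))) volume 0 1 :=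
    intervalIntegral.intervalIntegrable_rpow' hq1
  have h1 : IntervalIntegrable (fun x : ℝ => (1 - x) ^ (-(1 - p⁻¹))) volume 0 1 := by
    have := (h0.comp_sub_left 1)
    simpa using this.symm
  refine h1.mono_fun g_meas.aestronglyMeasurable ?_
  rw [Set.uIoc_of_le (zero_le_one)]
  refine (ae_restrict_iff' measurableSet_Ioc).2 (Filter.Eventually.of_forall ?_)
  intro u hu
  have hu0 : 0 < u := hu.1
  have hu1 : u ≤ 1 := hu.2
  have hup : u ^ p ≤ 1 := Real.rpow_le_one hu0.le hu1 (p_pos hp).le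
  have h1u : (0:ℝ) ≤ 1 - u := by linarith
  show ‖g p u‖ ≤ ‖(1 - u) ^ (-(1 - p⁻¹))‖
  rw [Real.norm_eq_abs, Real.norm_eq_abs, abs_of_nonneg (g_nonneg hp ⟨hu0.le, hu1⟩),
    abs_of_nonneg (Real.rpow_nonneg h1u _)]
  rcases eq_or_lt_of_le hu1 with h | h
  · subst h
    simp [g, Real.one_rpow, Real.zero_rpow (show -(1 - p⁻¹) ≠ 0 by have := q_pos hp; intro h; rw[neg_eq_zero] at h; linarith)]
  · have hx : (0:ℝ) < 1 - u := by linarith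
    have hle : u ^ p ≤ u := by
      calc u ^ p ≤ u ^ (1:ℝ) := Real.rpow_le_rpow_of_exponent_ge hu0 h.le hp.le
      _ = u := Real.rpow_one u
    have : (1:ℝ) - u ≤ 1 - u ^ p := by linarith
    exact Real.rpow_le_rpow_of_nonpos hx this (by have := q_pos hp; linarith)

lemma g_int' (hp : 1 < p) {a b : ℝ} (ha : a ∈ Icc (0:ℝ) 1) (hb : b ∈ Icc (0:ℝ) 1) :
    IntervalIntegrable (g p) volume a b := by
  refine (g_int hp).mono_set ?_
  rw [Set.uIcc_of_le zero_le_one]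
  exact Set.uIcc_subset_Icc ha hb

lemma F_zero : F p 0 = 0 := intervalIntegral.integral_same

lemma F_cont (hp : 1 < p) : ContinuousOn (F p) (Icc 0 1) := by
  have : IntegrableOn (g p) (uIcc 0 1) volume := by
    rw [Set.uIcc_of_le zero_le_one]
    exact (intervalIntegrable_iff_integrableOn_Icc_of_le zero_le_one).1 (g_int hp)
  have h := intervalIntegral.continuousOn_primitive_interval this
  rwa [Set.uIcc_of_le zero_le_one] at h

lemma F_mono (hp : 1 < p) : StrictMonoOn (F p) (Icc 0 1) := by
  intro a ha b hb hab
  have h1 : IntervalIntegrable (g p) volume 0 a := g_int' hp (left_mem_Icc.2 zero_le_one) ha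
  have h2 : IntervalIntegrable (g p) volume a b := g_int' hp ha hb
  have key : F p b = F p a + ∫ u in a..b, g p u := by
    rw [F, F, ← intervalIntegral.integral_add_adjacent_intervals h1 h2]
  have hpos : 0 < ∫ u in a..b, g p u := by
    refine intervalIntegral.intervalIntegral_pos_of_pos_on h2 ?_ hab
    intro x hx
    exact g_pos hp (le_of_lt (lt_of_le_of_lt ha.1 hx.1)) (lt_of_lt_of_le hx.2 hb.2)
  linarith

lemma g_contAt (hp : 1 < p) {s : ℝ} (hs0 : 0 < s) (hs1 : s < 1) : ContinuousAt (g p) s := by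
  have h1 : s ^ p < 1 := Real.rpow_lt_one hs0.le hs1 (p_pos hp)
  have h2 : ContinuousAt (fun u : ℝ => 1 - u ^ p) s :=
    continuousAt_const.sub (Real.continuousAt_rpow_const s p (Or.inr (p_pos hp).le))
  have h3 : ContinuousAt (fun x : ℝ => x ^ (-(1 - p⁻¹))) (1 - s ^ p) :=
    Real.continuousAt_rpow_const _ _ (Or.inl (by linarith : (0:ℝ) < 1 - s ^ p).ne')
  exact ContinuousAt.comp (g := fun x : ℝ => x ^ (-(1 - p⁻¹))) (f := fun u : ℝ => 1 - u ^ p) h3 h2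

lemma F_hasDeriv (hp : 1 < p) {s : ℝ} (hs0 : 0 < s) (hs1 : s < 1) :
    HasDerivAt (F p) (g p s) s := by
  refine intervalIntegral.integral_hasDerivAt_right
    (g_int' hp (left_mem_Icc.2 zero_le_one) ⟨hs0.le, hs1.le⟩)
    ⟨Set.univ, Filter.univ_mem, g_meas.aestronglyMeasurable⟩ (g_contAt hp hs0 hs1)

/-- the quarter period -/
noncomputable def T (p : ℝ) : ℝ := F p 1

lemma T_pos (hp : 1 < p) : 0 < T p := by
  have h := F_mono hp (left_mem_Icc.2 zero_le_one) (right_mem_Icc.2 zero_le_one) zero_lt_one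
  rwa [F_zero] at h

lemma F_mem (hp : 1 < p) (s : Icc (0:ℝ) 1) : F p s.1 ∈ Icc (0:ℝ) (T p) := by
  constructor
  · have h := (F_mono hp).monotoneOn (left_mem_Icc.2 zero_le_one) s.2 s.2.1
    rwa [F_zero] at h
  · exact (F_mono hp).monotoneOn s.2 (right_mem_Icc.2 zero_le_one) s.2.2

/-- order isomorphism between `[0,1]` and `[0,T]` induced by `F` -/
noncomputable def e (hp : 1 < p) : Icc (0:ℝ) 1 ≃o Icc (0:ℝ) (T p) := by
  refine StrictMono.orderIsoOfSurjective (fun s => ⟨F p s.1, F_mem hp s⟩) ?_ ?_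
  · intro a b hab
    exact Subtype.mk_lt_mk.2 (F_mono hp a.2 b.2 (Subtype.coe_lt_coe.2 hab))
  · rintro ⟨y, hy⟩
    have hsub : Icc (0:ℝ) (T p) ⊆ F p '' Icc 0 1 := by
      have h := intermediate_value_Icc (zero_le_one) (F_cont hp)
      rwa [F_zero] at h
    obtain ⟨s, hs, hFs⟩ := hsub hy
    exact ⟨⟨s, hs⟩, Subtype.ext hFs⟩

lemma e_apply (hp : 1 < p) (s : Icc (0:ℝ) 1) : ((e hp s : Icc (0:ℝ) (T p)) : ℝ) = F p s.1 := by
  have : ⇑(e hp) = fun s : Icc (0:ℝ) 1 => (⟨F p s.1, F_mem hp s⟩ : Icc (0:ℝ) (T p)) :=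
    StrictMono.coe_orderIsoOfSurjective _ _ _
  rw [this]

/-- the squigonometric sine, clamped: `sin_p` on `[0, T]`, `0` below, `1` above -/
noncomputable def S0 (hp : 1 < p) : ℝ → ℝ :=
  fun t => ((e hp).symm (projIcc 0 (T p) (T_pos hp).le t) : ℝ)

lemma S0_cont (hp : 1 < p) : Continuous (S0 hp) :=
  continuous_subtype_val.comp ((e hp).symm.continuous.comp continuous_projIcc)

lemma S0_mem (hp : 1 < p) (t : ℝ) : S0 hp t ∈ Icc (0:ℝ) 1 := Subtype.mem _

lemma F_S0 (hp : 1 < p) {t : ℝ} (ht : t ∈ Icc 0 (T p)) : F p (S0 hp t) = t := by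
  rw [S0, projIcc_of_mem _ ht]
  have h := e_apply hp ((e hp).symm ⟨t, ht⟩)
  rw [OrderIso.apply_symm_apply] at h
  exact h.symm

lemma S0_of_nonpos (hp : 1 < p) {t : ℝ} (ht : t ≤ 0) : S0 hp t = 0 := by
  rw [S0, projIcc_of_le_left _ ht]
  have : (e hp) ⟨0, left_mem_Icc.2 zero_le_one⟩ = ⟨0, left_mem_Icc.2 (T_pos hp).le⟩ := by
    apply Subtype.ext
    rw [e_apply hp]
    exact F_zero
  rw [← this, OrderIso.symm_apply_apply]

lemma S0_of_ge (hp : 1 < p) {t : ℝ} (ht : T p ≤ t) : S0 hp t = 1 := by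
  rw [S0, projIcc_of_right_le _ ht]
  have : (e hp) ⟨1, right_mem_Icc.2 zero_le_one⟩ = ⟨T p, right_mem_Icc.2 (T_pos hp).le⟩ :=
    Subtype.ext (e_apply hp _)
  rw [← this, OrderIso.symm_apply_apply]

lemma S0_mem_Ioo (hp : 1 < p) {t : ℝ} (ht : t ∈ Ioo 0 (T p)) : S0 hp t ∈ Ioo (0:ℝ) 1 := by
  have h0 := (S0_mem hp t).1
  have h1 := (S0_mem hp t).2
  have hF := F_S0 hp ⟨ht.1.le, ht.2.le⟩
  constructor
  · rcases eq_or_lt_of_le h0 with h | h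
    · exfalso
      rw [← h] at hF
      rw [← hF, F_zero] at ht
      exact lt_irrefl _ ht.1
    · exact h
  · rcases eq_or_lt_of_le h1 with h | h
    · exfalso
      rw [h] at hF
      rw [← hF] at ht
      exact lt_irrefl _ ht.2
    · exact h

lemma S0_hasDeriv (hp : 1 < p) {t : ℝ} (ht : t ∈ Ioo 0 (T p)) :
    HasDerivAt (S0 hp) ((1 - (S0 hp t) ^ p) ^ (1 - p⁻¹)) t := by
  set s := S0 hp t with hs
  have hsm : s ∈ Ioo (0:ℝ) 1 := S0_mem_Ioo hp ht
  have hF : HasDerivAt (F p) (g p s) s := F_hasDeriv hp hsm.1 hsm.2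
  have hne : g p s ≠ 0 := (g_pos hp hsm.1.le hsm.2).ne'
  have hinv : ∀ᶠ y in nhds t, F p (S0 hp y) = y := by
    filter_upwards [Ioo_mem_nhds ht.1 ht.2] with y hy
    exact F_S0 hp ⟨hy.1.le, hy.2.le⟩
  have h := HasDerivAt.of_local_left_inverse ((S0_cont hp).continuousAt) hF hne hinv
  have hb : (0:ℝ) < 1 - s ^ p := by
    have : s ^ p < 1 := Real.rpow_lt_one hsm.1.le hsm.2 (p_pos hp)
    linarith
  have : (g p s)⁻¹ = (1 - s ^ p) ^ (1 - p⁻¹) := by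
    rw [g, Real.rpow_neg hb.le, inv_inv]
  rwa [this] at h

/-- global squigonometric sine -/
noncomputable def Sq (hp : 1 < p) : ℝ → ℝ := fun t => min t 0 + S0 hp t

/-- global squigonometric cosine -/
noncomputable def Cq (hp : 1 < p) : ℝ → ℝ :=
  fun t => (1 - S0 hp t ^ p) ^ p⁻¹ + min (T p - t) 0

/-- candidate derivative of `Sq` -/
noncomputable def dS (hp : 1 < p) : ℝ → ℝ := fun t => (1 - S0 hp t ^ p) ^ (1 - p⁻¹)

/-- candidate derivative of `Cq` -/
noncomputable def dC (hp : 1 < p) : ℝ → ℝ := fun t => -(S0 hp t ^ (p - 1))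

lemma Sq_cont (hp : 1 < p) : Continuous (Sq hp) :=
  (continuous_id.min continuous_const).add (S0_cont hp)

lemma base_cont (hp : 1 < p) : Continuous (fun t => 1 - S0 hp t ^ p) :=
  continuous_const.sub ((S0_cont hp).rpow_const (fun _ => Or.inr (p_pos hp).le))

lemma Cq_cont (hp : 1 < p) : Continuous (Cq hp) :=
  ((base_cont hp).rpow_const (fun _ => Or.inr (inv_pos.2 (p_pos hp)).le)).add
    ((continuous_const.sub continuous_id).min continuous_const)

lemma dS_cont (hp : 1 < p) : Continuous (dS hp) :=
  (base_cont hp).rpow_const (fun _ => Or.inr (q_pos hp).le)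

lemma dC_cont (hp : 1 < p) : Continuous (dC hp) :=
  ((S0_cont hp).rpow_const (fun _ => Or.inr (by linarith : (0:ℝ) ≤ p - 1))).neg

lemma base_pos (hp : 1 < p) {t : ℝ} (ht : t ∈ Ioo 0 (T p)) : 0 < 1 - S0 hp t ^ p := by
  have h := S0_mem_Ioo hp ht
  have : S0 hp t ^ p < 1 := Real.rpow_lt_one h.1.le h.2 (p_pos hp)
  linarith

lemma base_nonneg (hp : 1 < p) (t : ℝ) : 0 ≤ 1 - S0 hp t ^ p := by
  have h := S0_mem hp t
  have : S0 hp t ^ p ≤ 1 := Real.rpow_le_one h.1 h.2 (p_pos hp).le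
  linarith

lemma Sq_deriv_neg (hp : 1 < p) {t : ℝ} (ht : t < 0) : HasDerivAt (Sq hp) (dS hp t) t := by
  have hval : dS hp t = 1 := by
    rw [dS, S0_of_nonpos hp ht.le, Real.zero_rpow (p_pos hp).ne', sub_zero, Real.one_rpow]
  rw [hval]
  refine (hasDerivAt_id t).congr_of_eventuallyEq ?_
  filter_upwards [Iio_mem_nhds ht] with y (hy : y < 0)
  rw [Sq, S0_of_nonpos hp hy.le, min_eq_left hy.le, add_zero]
  rfl

lemma Sq_deriv_mid (hp : 1 < p) {t : ℝ} (ht : t ∈ Ioo 0 (T p)) :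
    HasDerivAt (Sq hp) (dS hp t) t := by
  refine (S0_hasDeriv hp ht).congr_of_eventuallyEq ?_
  filter_upwards [Ioi_mem_nhds ht.1] with y (hy : 0 < y)
  rw [Sq, min_eq_right hy.le, zero_add]

lemma Sq_deriv_gt (hp : 1 < p) {t : ℝ} (ht : T p < t) : HasDerivAt (Sq hp) (dS hp t) t := by
  have hval : dS hp t = 0 := by
    rw [dS, S0_of_ge hp ht.le, Real.one_rpow, sub_self, Real.zero_rpow (q_pos hp).ne']
  rw [hval]
  refine (hasDerivAt_const t 1).congr_of_eventuallyEq ?_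
  filter_upwards [Ioi_mem_nhds ht] with y (hy : T p < y)
  have hy0 : (0:ℝ) < y := lt_trans (T_pos hp) hy
  rw [Sq, S0_of_ge hp hy.le, min_eq_right hy0.le, zero_add]

lemma Sq_deriv (hp : 1 < p) (t : ℝ) : HasDerivAt (Sq hp) (dS hp t) t := by
  rcases lt_trichotomy t 0 with h | h | h
  · exact Sq_deriv_neg hp h
  · subst h
    refine hasDerivAt_of_eventually_ne ?_ (Sq_cont hp).continuousAt (dS_cont hp).continuousAt
    have hmem : Ioo (-1 : ℝ) (T p) ∈ nhds (0:ℝ) := Ioo_mem_nhds (by linarith) (T_pos hp)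
    filter_upwards [mem_nhdsWithin_of_mem_nhds hmem, self_mem_nhdsWithin] with y hy hne
    rcases lt_or_gt_of_ne (hne : y ≠ 0) with h | h
    · exact Sq_deriv_neg hp h
    · exact Sq_deriv_mid hp ⟨h, hy.2⟩
  rcases lt_trichotomy t (T p) with h2 | h2 | h2
  · exact Sq_deriv_mid hp ⟨h, h2⟩
  · subst h2
    refine hasDerivAt_of_eventually_ne ?_ (Sq_cont hp).continuousAt (dS_cont hp).continuousAt
    have hmem : Ioo (0 : ℝ) (T p + 1) ∈ nhds (T p) := Ioo_mem_nhds (T_pos hp) (by linarith)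
    filter_upwards [mem_nhdsWithin_of_mem_nhds hmem, self_mem_nhdsWithin] with y hy hne
    rcases lt_or_gt_of_ne (hne : y ≠ T p) with h | h
    · exact Sq_deriv_mid hp ⟨hy.1, h⟩
    · exact Sq_deriv_gt hp h
  · exact Sq_deriv_gt hp h2

lemma Cq_deriv_neg (hp : 1 < p) {t : ℝ} (ht : t < 0) : HasDerivAt (Cq hp) (dC hp t) t := by
  have hval : dC hp t = 0 := by
    rw [dC, S0_of_nonpos hp ht.le, Real.zero_rpow (by linarith : p - 1 ≠ 0), neg_zero]
  rw [hval]
  refine (hasDerivAt_const t 1).congr_of_eventuallyEq ?_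
  filter_upwards [Iio_mem_nhds ht] with y (hy : y < 0)
  have : (0:ℝ) ≤ T p - y := by have := T_pos hp; linarith
  rw [Cq, S0_of_nonpos hp hy.le, Real.zero_rpow (p_pos hp).ne', sub_zero, Real.one_rpow,
    min_eq_right this, add_zero]

lemma Cq_deriv_mid (hp : 1 < p) {t : ℝ} (ht : t ∈ Ioo 0 (T p)) :
    HasDerivAt (Cq hp) (dC hp t) t := by
  set s := S0 hp t with hsdef
  have hsm : s ∈ Ioo (0:ℝ) 1 := S0_mem_Ioo hp ht
  have hb : (0:ℝ) < 1 - s ^ p := base_pos hp ht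
  set sd := (1 - s ^ p) ^ (1 - p⁻¹) with hsddef
  have hd : HasDerivAt (S0 hp) sd t := S0_hasDeriv hp ht
  have h1 : HasDerivAt (fun y => S0 hp y ^ p) (sd * p * s ^ (p - 1)) t :=
    hd.rpow_const (Or.inl hsm.1.ne')
  have h2 : HasDerivAt (fun y => 1 - S0 hp y ^ p) (-(sd * p * s ^ (p - 1))) t := by
    have h := (hasDerivAt_const t (1:ℝ)).sub h1
    rw [zero_sub] at h
    exact h
  have h3 : HasDerivAt (fun y => (1 - S0 hp y ^ p) ^ p⁻¹)
      (-(sd * p * s ^ (p - 1)) * p⁻¹ * (1 - s ^ p) ^ (p⁻¹ - 1)) t :=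
    h2.rpow_const (Or.inl hb.ne')
  have key : sd * (1 - s ^ p) ^ (p⁻¹ - 1) = 1 := by
    rw [hsddef, ← Real.rpow_add hb]
    have : (1 - p⁻¹) + (p⁻¹ - 1) = 0 := by ring
    rw [this, Real.rpow_zero]
  have hpp : p * p⁻¹ = 1 := mul_inv_cancel₀ (p_pos hp).ne'
  have halg : -(sd * p * s ^ (p - 1)) * p⁻¹ * (1 - s ^ p) ^ (p⁻¹ - 1) = dC hp t := by
    rw [dC, ← hsdef]
    have : -(sd * p * s ^ (p - 1)) * p⁻¹ * (1 - s ^ p) ^ (p⁻¹ - 1) =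
        -((sd * (1 - s ^ p) ^ (p⁻¹ - 1)) * (p * p⁻¹) * s ^ (p - 1)) := by ring
    rw [this, key, hpp, one_mul, one_mul]
  rw [← halg]
  refine h3.congr_of_eventuallyEq ?_
  filter_upwards [Iio_mem_nhds ht.2] with y (hy : y < T p)
  have : (0:ℝ) ≤ T p - y := by linarith
  rw [Cq, min_eq_right this, add_zero]

lemma Cq_deriv_gt (hp : 1 < p) {t : ℝ} (ht : T p < t) : HasDerivAt (Cq hp) (dC hp t) t := by
  have hval : dC hp t = -1 := by
    rw [dC, S0_of_ge hp ht.le, Real.one_rpow]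
  rw [hval]
  have hder : HasDerivAt (fun y : ℝ => T p - y) (-1) t := by
    simpa using (hasDerivAt_id t).const_sub (T p)
  refine hder.congr_of_eventuallyEq ?_
  filter_upwards [Ioi_mem_nhds ht] with y (hy : T p < y)
  have h1 : T p - y ≤ 0 := by linarith
  rw [Cq, S0_of_ge hp hy.le, Real.one_rpow, sub_self,
    Real.zero_rpow (inv_pos.2 (p_pos hp)).ne', min_eq_left h1, zero_add]

lemma Cq_deriv (hp : 1 < p) (t : ℝ) : HasDerivAt (Cq hp) (dC hp t) t := by
  rcases lt_trichotomy t 0 with h | h | h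
  · exact Cq_deriv_neg hp h
  · subst h
    refine hasDerivAt_of_eventually_ne ?_ (Cq_cont hp).continuousAt (dC_cont hp).continuousAt
    have hmem : Ioo (-1 : ℝ) (T p) ∈ nhds (0:ℝ) := Ioo_mem_nhds (by linarith) (T_pos hp)
    filter_upwards [mem_nhdsWithin_of_mem_nhds hmem, self_mem_nhdsWithin] with y hy hne
    rcases lt_or_gt_of_ne (hne : y ≠ 0) with h | h
    · exact Cq_deriv_neg hp h
    · exact Cq_deriv_mid hp ⟨h, hy.2⟩
  rcases lt_trichotomy t (T p) with h2 | h2 | h2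
  · exact Cq_deriv_mid hp ⟨h, h2⟩
  · subst h2
    refine hasDerivAt_of_eventually_ne ?_ (Cq_cont hp).continuousAt (dC_cont hp).continuousAt
    have hmem : Ioo (0 : ℝ) (T p + 1) ∈ nhds (T p) := Ioo_mem_nhds (T_pos hp) (by linarith)
    filter_upwards [mem_nhdsWithin_of_mem_nhds hmem, self_mem_nhdsWithin] with y hy hne
    rcases lt_or_gt_of_ne (hne : y ≠ T p) with h | h
    · exact Cq_deriv_mid hp ⟨hy.1, h⟩
    · exact Cq_deriv_gt hp h
  · exact Cq_deriv_gt hp h2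

lemma Sq_eq (hp : 1 < p) {t : ℝ} (ht : t ∈ Icc 0 (T p)) : Sq hp t = S0 hp t := by
  rw [Sq, min_eq_right ht.1, zero_add]

lemma Cq_eq (hp : 1 < p) {t : ℝ} (ht : t ∈ Icc 0 (T p)) :
    Cq hp t = (1 - S0 hp t ^ p) ^ p⁻¹ := by
  rw [Cq, min_eq_right (by linarith [ht.2] : (0:ℝ) ≤ T p - t), add_zero]

end Squig

/-- Existence of the squigonometric functions `cos_p` and `sin_p` on the
first-quadrant parameter interval `[0, π_p/2]`, for every real `p > 1`:
they solve the coupled IVP `C' = -S^(p-1)`, `S' = C^(p-1)`, `C 0 = 1`, `S 0 = 0`,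
are nonnegative on `[0, T]`, and `T` is a zero of `C`. -/
theorem squigonometric_existence (p : ℝ) (hp : 1 < p) :
    ∃ T : ℝ, 0 < T ∧ ∃ C S : ℝ → ℝ,
      Differentiable ℝ C ∧ Differentiable ℝ S ∧
      (∀ t ∈ Set.Icc (0 : ℝ) T,
        deriv C t = -(S t ^ (p - 1)) ∧
        deriv S t = C t ^ (p - 1) ∧
        0 ≤ C t ∧ 0 ≤ S t) ∧
      C 0 = 1 ∧ S 0 = 0 ∧ C T = 0 := by
  refine ⟨Squig.T p, Squig.T_pos hp, Squig.Cq hp, Squig.Sq hp,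
    fun t => (Squig.Cq_deriv hp t).differentiableAt,
    fun t => (Squig.Sq_deriv hp t).differentiableAt, ?_, ?_, ?_, ?_⟩
  · intro t ht
    have hS0 := Squig.S0_mem hp t
    have hb0 : (0:ℝ) ≤ 1 - Squig.S0 hp t ^ p := Squig.base_nonneg hp t
    refine ⟨?_, ?_, ?_, ?_⟩
    · rw [(Squig.Cq_deriv hp t).deriv, Squig.dC, Squig.Sq_eq hp ht]
    · have hpn : p⁻¹ * (p - 1) = 1 - p⁻¹ := by
        field_simp
      rw [(Squig.Sq_deriv hp t).deriv, Squig.dS, Squig.Cq_eq hp ht,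
        ← Real.rpow_mul hb0, hpn]
    · rw [Squig.Cq_eq hp ht]
      exact Real.rpow_nonneg hb0 _
    · rw [Squig.Sq_eq hp ht]
      exact hS0.1
  · rw [Squig.Cq_eq hp (Set.left_mem_Icc.2 (Squig.T_pos hp).le),
      Squig.S0_of_nonpos hp le_rfl, Real.zero_rpow (Squig.p_pos hp).ne', sub_zero, Real.one_rpow]
  · rw [Squig.Sq_eq hp (Set.left_mem_Icc.2 (Squig.T_pos hp).le), Squig.S0_of_nonpos hp le_rfl]
  · rw [Squig.Cq_eq hp (Set.right_mem_Icc.2 (Squig.T_pos hp).le), Squig.S0_of_ge hp le_rfl,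
      Real.one_rpow, sub_self, Real.zero_rpow (inv_pos.2 (Squig.p_pos hp)).ne']
end

section
/- Under the squigonometric hypotheses, C(t)^p + S(t)^p = 1 for all t ∈ [0,T]. -/
/-- Under the squigonometric hypotheses, the Pythagorean-type identity
`C(t)^p + S(t)^p = 1` holds on `[0, T]`. -/
theorem squigonometric_pythagorean
    (p T : ℝ) (C S : ℝ → ℝ)
    (hp : 1 ≤ p) (hT : 0 < T)
    (hCdiff : Differentiable ℝ C) (hSdiff : Differentiable ℝ S)
    (hC' : ∀ t ∈ Set.Icc (0 : ℝ) T, deriv C t = -(S t ^ (p - 1)))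
    (hS' : ∀ t ∈ Set.Icc (0 : ℝ) T, deriv S t = C t ^ (p - 1))
    (hCnn : ∀ t ∈ Set.Icc (0 : ℝ) T, 0 ≤ C t)
    (hSnn : ∀ t ∈ Set.Icc (0 : ℝ) T, 0 ≤ S t)
    (hC0 : C 0 = 1) (hS0 : S 0 = 0) (hCT : C T = 0) :
    ∀ t ∈ Set.Icc (0 : ℝ) T, C t ^ p + S t ^ p = 1 := by
  set f : ℝ → ℝ := fun t => C t ^ p + S t ^ p with hf
  have key : ∀ t ∈ Set.Icc (0 : ℝ) T, f t = f 0 := by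
    apply constant_of_has_deriv_right_zero
    · apply Continuous.continuousOn
      exact ((Real.continuous_rpow_const (by linarith : (0:ℝ) ≤ p)).comp hCdiff.continuous).add
        ((Real.continuous_rpow_const (by linarith : (0:ℝ) ≤ p)).comp hSdiff.continuous)
    · intro x hx
      have hx' : x ∈ Set.Icc (0 : ℝ) T := Set.mem_Icc.2 ⟨hx.1, hx.2.le⟩
      have h1 : HasDerivAt (fun t => C t ^ p)
          (p * C x ^ (p - 1) * deriv C x) x := by
        have := (Real.hasDerivAt_rpow_const (x := C x) (p := p) (Or.inr hp)).comp x
          (hCdiff x).hasDerivAt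
        simpa [Function.comp_def, mul_comm, mul_assoc, mul_left_comm] using this
      have h2 : HasDerivAt (fun t => S t ^ p)
          (p * S x ^ (p - 1) * deriv S x) x := by
        have := (Real.hasDerivAt_rpow_const (x := S x) (p := p) (Or.inr hp)).comp x
          (hSdiff x).hasDerivAt
        simpa [Function.comp_def, mul_comm, mul_assoc, mul_left_comm] using this
      have h3 : HasDerivAt f 0 x := by
        have := h1.add h2
        rw [hC' x hx', hS' x hx'] at this
        have h0 : p * C x ^ (p - 1) * -(S x ^ (p - 1)) + p * S x ^ (p - 1) * C x ^ (p - 1) = 0 := by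
          ring
        rw [h0] at this
        exact this
      exact h3.hasDerivWithinAt
  intro t ht
  have := key t ht
  simp only [hf] at this
  rw [this, hC0, hS0, Real.one_rpow, Real.zero_rpow (by linarith)]
  norm_num
end

section
/- Under the squigonometric hypotheses, S is monotone increasing on [0,T], C is monotone decreasing on [0,T], 0 ≤ C(t) ≤ 1 and 0 ≤ S(t) ≤ 1 for all t ∈ [0,T], and S(T) = 1. -/
/-!
Both derivatives have a sign on `[0,T]`, which gives the monotonicity. The derivative of
`C ^ p + S ^ p` is `p (C' C ^ (p-1) + S' S ^ (p-1)) = p (-S ^ (p-1) C ^ (p-1) + C ^ (p-1) S ^ (p-1)) = 0`,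
so `C ^ p + S ^ p = 1` on `[0,T]`; this bounds `S` by `1` and forces `S T = 1` once `C T = 0`.
-/

open Set

lemma monotoneOn_Icc_of_deriv_nonneg {f : ℝ → ℝ} {a b : ℝ} (hf : Differentiable ℝ f)
    (h : ∀ t ∈ Icc a b, 0 ≤ deriv f t) : MonotoneOn f (Icc a b) :=
  monotoneOn_of_deriv_nonneg (convex_Icc a b) hf.continuous.continuousOn hf.differentiableOn
    fun t ht => h t (interior_subset ht)

lemma antitoneOn_Icc_of_deriv_nonpos {f : ℝ → ℝ} {a b : ℝ} (hf : Differentiable ℝ f)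
    (h : ∀ t ∈ Icc a b, deriv f t ≤ 0) : AntitoneOn f (Icc a b) :=
  antitoneOn_of_deriv_nonpos (convex_Icc a b) hf.continuous.continuousOn hf.differentiableOn
    fun t ht => h t (interior_subset ht)

lemma rpow_add_rpow_eq_of_deriv_eq {p a b : ℝ} {C S : ℝ → ℝ} (hp : 1 ≤ p)
    (hC : Differentiable ℝ C) (hS : Differentiable ℝ S)
    (hC' : ∀ t ∈ Icc a b, deriv C t = -(S t ^ (p - 1)))
    (hS' : ∀ t ∈ Icc a b, deriv S t = C t ^ (p - 1)) :
    ∀ t ∈ Icc a b, C t ^ p + S t ^ p = C a ^ p + S a ^ p := by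
  have hF : ∀ t, HasDerivAt (fun u => C u ^ p + S u ^ p)
      (deriv C t * p * C t ^ (p - 1) + deriv S t * p * S t ^ (p - 1)) t := fun t =>
    ((hC t).hasDerivAt.rpow_const (Or.inr hp)).add ((hS t).hasDerivAt.rpow_const (Or.inr hp))
  refine constant_of_has_deriv_right_zero
    (fun t _ => (hF t).continuousAt.continuousWithinAt) fun t ht => ?_
  have hzero : deriv C t * p * C t ^ (p - 1) + deriv S t * p * S t ^ (p - 1) = 0 := by
    rw [hC' t (Ico_subset_Icc_self ht), hS' t (Ico_subset_Icc_self ht)]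
    ring
  exact hzero ▸ (hF t).hasDerivWithinAt

lemma le_one_of_rpow_add_rpow_eq_one {x y p : ℝ} (hx : 0 ≤ x) (hy : 0 ≤ y) (hp : 0 < p)
    (h : x ^ p + y ^ p = 1) : y ≤ 1 := by
  have hyp : y ^ p ≤ (1 : ℝ) ^ p := by
    rw [Real.one_rpow]
    linarith [Real.rpow_nonneg hx p]
  exact (Real.rpow_le_rpow_iff hy zero_le_one hp).mp hyp

/-- Under the squigonometric hypotheses: `S` is monotone increasing on `[0,T]`,
`C` is monotone decreasing on `[0,T]`, both stay in `[0,1]` there, and `S T = 1`. -/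
theorem squigonometric_monotone
    (p T : ℝ) (C S : ℝ → ℝ)
    (hp : 1 ≤ p) (hT : 0 < T)
    (hCdiff : Differentiable ℝ C) (hSdiff : Differentiable ℝ S)
    (hC' : ∀ t ∈ Set.Icc (0 : ℝ) T, deriv C t = -(S t ^ (p - 1)))
    (hS' : ∀ t ∈ Set.Icc (0 : ℝ) T, deriv S t = C t ^ (p - 1))
    (hCnn : ∀ t ∈ Set.Icc (0 : ℝ) T, 0 ≤ C t)
    (hSnn : ∀ t ∈ Set.Icc (0 : ℝ) T, 0 ≤ S t)
    (hC0 : C 0 = 1) (hS0 : S 0 = 0) (hCT : C T = 0) :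
    MonotoneOn S (Set.Icc (0 : ℝ) T) ∧
    AntitoneOn C (Set.Icc (0 : ℝ) T) ∧
    (∀ t ∈ Set.Icc (0 : ℝ) T, 0 ≤ C t ∧ C t ≤ 1 ∧ 0 ≤ S t ∧ S t ≤ 1) ∧
    S T = 1 := by
  have hp0 : 0 < p := zero_lt_one.trans_le hp
  have h0 : (0 : ℝ) ∈ Icc 0 T := left_mem_Icc.mpr hT.le
  have hTmem : T ∈ Icc 0 T := right_mem_Icc.mpr hT.le
  have hS_mono : MonotoneOn S (Icc 0 T) := monotoneOn_Icc_of_deriv_nonneg hSdiff fun t ht =>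
    hS' t ht ▸ Real.rpow_nonneg (hCnn t ht) _
  have hC_anti : AntitoneOn C (Icc 0 T) := antitoneOn_Icc_of_deriv_nonpos hCdiff fun t ht =>
    hC' t ht ▸ neg_nonpos.mpr (Real.rpow_nonneg (hSnn t ht) _)
  have hpyth : ∀ t ∈ Icc 0 T, C t ^ p + S t ^ p = 1 := fun t ht => by
    rw [rpow_add_rpow_eq_of_deriv_eq hp hCdiff hSdiff hC' hS' t ht, hC0, hS0,
      Real.one_rpow, Real.zero_rpow hp0.ne', add_zero]
  refine ⟨hS_mono, hC_anti, fun t ht => ⟨hCnn t ht, hC0 ▸ hC_anti h0 ht ht.1, hSnn t ht,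
    le_one_of_rpow_add_rpow_eq_one (hCnn t ht) (hSnn t ht) hp0 (hpyth t ht)⟩, ?_⟩
  have hSTp : S T ^ p = (1 : ℝ) ^ p := by
    simpa [hCT, Real.zero_rpow hp0.ne'] using hpyth T hTmem
  exact (Real.rpow_left_inj (hSnn T hTmem) zero_le_one hp0.ne').mp hSTp
end

section
/- Under the squigonometric hypotheses with p > 1, there exists t₀ ∈ (0,T) such that C(t₀) = S(t₀) = 2^(-1/p). -/
/-- Under the squigonometric hypotheses with `p > 1`, there is a diagonal point
`t₀ ∈ (0,T)` where `C t₀ = S t₀ = 2^(-1/p)`. -/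
theorem squigonometric_diagonal_point
    (p T : ℝ) (C S : ℝ → ℝ)
    (hp : 1 < p) (hT : 0 < T)
    (hCdiff : Differentiable ℝ C) (hSdiff : Differentiable ℝ S)
    (hC' : ∀ t ∈ Set.Icc (0 : ℝ) T, deriv C t = -(S t ^ (p - 1)))
    (hS' : ∀ t ∈ Set.Icc (0 : ℝ) T, deriv S t = C t ^ (p - 1))
    (hCnn : ∀ t ∈ Set.Icc (0 : ℝ) T, 0 ≤ C t)
    (hSnn : ∀ t ∈ Set.Icc (0 : ℝ) T, 0 ≤ S t)
    (hC0 : C 0 = 1) (hS0 : S 0 = 0) (hCT : C T = 0) :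
    ∃ t₀ ∈ Set.Ioo (0 : ℝ) T,
      C t₀ = (2 : ℝ) ^ (-(1 / p)) ∧ S t₀ = (2 : ℝ) ^ (-(1 / p)) := by
  have hp0 : (0 : ℝ) < p := lt_trans one_pos hp
  set F : ℝ → ℝ := fun t => C t ^ p + S t ^ p with hFdef
  -- F is constant on [0,T]
  have hFconst : ∀ t ∈ Set.Icc (0 : ℝ) T, F t = F 0 := by
    apply constant_of_has_deriv_right_zero
    · apply ContinuousOn.add
      · exact (hCdiff.continuous.continuousOn).rpow_const fun t _ => Or.inr hp0.le
      · exact (hSdiff.continuous.continuousOn).rpow_const fun t _ => Or.inr hp0.le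
    · intro x hx
      have hx' : x ∈ Set.Icc (0 : ℝ) T := Set.mem_Icc_of_Ico hx
      have hC'' : HasDerivAt C (-(S x ^ (p - 1))) x := by
        have := hCdiff.differentiableAt (x := x) |>.hasDerivAt
        rwa [hC' x hx'] at this
      have hS'' : HasDerivAt S (C x ^ (p - 1)) x := by
        have := hSdiff.differentiableAt (x := x) |>.hasDerivAt
        rwa [hS' x hx'] at this
      have h1 : HasDerivAt (fun t => C t ^ p)
          (-(S x ^ (p - 1)) * p * C x ^ (p - 1)) x :=
        hC''.rpow_const (Or.inr hp.le)
      have h2 : HasDerivAt (fun t => S t ^ p)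
          (C x ^ (p - 1) * p * S x ^ (p - 1)) x :=
        hS''.rpow_const (Or.inr hp.le)
      have h3 : HasDerivAt F 0 x := by
        have := h1.add h2
        rw [show -(S x ^ (p - 1)) * p * C x ^ (p - 1) + C x ^ (p - 1) * p * S x ^ (p - 1) = 0 by ring] at this
        exact this
      exact h3.hasDerivWithinAt
  have hF0 : F 0 = 1 := by
    simp [hFdef, hC0, hS0, Real.one_rpow, Real.zero_rpow (ne_of_gt hp0)]
  -- S T = 1
  have hST : S T = 1 := by
    have hFT : F T = 1 := (hFconst T (Set.mem_Icc.2 ⟨hT.le, le_refl T⟩)).trans hF0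
    have : S T ^ p = 1 := by
      simpa [hFdef, hCT, Real.zero_rpow (ne_of_gt hp0)] using hFT
    have hSTnn : 0 ≤ S T := hSnn T (Set.mem_Icc.2 ⟨hT.le, le_refl T⟩)
    have := congrArg (fun x : ℝ => x ^ (1 / p)) this
    rwa [← Real.rpow_mul hSTnn, mul_one_div, div_self hp0.ne', Real.rpow_one,
      Real.one_rpow] at this
  -- IVT for C - S
  have hcont : ContinuousOn (fun t => C t - S t) (Set.Icc 0 T) :=
    (hCdiff.continuous.sub hSdiff.continuous).continuousOn
  have hmem : (0 : ℝ) ∈ Set.Ioo (C T - S T) (C 0 - S 0) := by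
    rw [hC0, hS0, hCT, hST]; norm_num
  obtain ⟨t₀, ht₀, heq⟩ := intermediate_value_Ioo' hT.le hcont hmem
  have ht₀' : t₀ ∈ Set.Icc (0 : ℝ) T := Set.mem_Icc_of_Ioo ht₀
  have heq' : C t₀ - S t₀ = 0 := heq
  have hCS : C t₀ = S t₀ := by linarith
  have hFeq : C t₀ ^ p + S t₀ ^ p = 1 := (hFconst t₀ ht₀').trans hF0
  have hCp : C t₀ ^ p = 1 / 2 := by
    rw [← hCS] at hFeq; linarith
  have hCnn' : 0 ≤ C t₀ := hCnn t₀ ht₀'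
  have hCval : C t₀ = (2 : ℝ) ^ (-(1 / p)) := by
    have := congrArg (fun x : ℝ => x ^ (1 / p)) hCp
    rw [← Real.rpow_mul hCnn', mul_one_div, div_self (ne_of_gt hp0), Real.rpow_one] at this
    rw [this, one_div (2:ℝ), Real.inv_rpow (by norm_num : (0:ℝ) ≤ 2),
      ← Real.rpow_neg (by norm_num : (0:ℝ) ≤ 2)]
  exact ⟨t₀, ht₀, hCval, hCS ▸ hCval⟩
end

section
/- Under the squigonometric hypotheses, for every t₀ ∈ [0,T] the area A(t₀) of the sector of the unit p-circle swept from the point (1,0) to the point (C(t₀), S(t₀)) satisfies A(t₀) := (1/2)·S(t₀)·C(t₀) + ∫₀^{t₀} S(u)^p du = t₀/2. In particular the area-based parameter t is proportional to the swept area. -/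
/-- Under the squigonometric hypotheses, the area of the sector of the unit
`p`-circle swept from `(1,0)` to `(C t₀, S t₀)`, namely
`(1/2)·S(t₀)·C(t₀) + ∫₀^{t₀} S(u)^p du`, equals `t₀/2`. -/
theorem squigonometric_sector_area
    (p T : ℝ) (C S : ℝ → ℝ)
    (hp : 1 ≤ p) (hT : 0 < T)
    (hCdiff : Differentiable ℝ C) (hSdiff : Differentiable ℝ S)
    (hC' : ∀ t ∈ Set.Icc (0 : ℝ) T, deriv C t = -(S t ^ (p - 1)))
    (hS' : ∀ t ∈ Set.Icc (0 : ℝ) T, deriv S t = C t ^ (p - 1))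
    (hCnn : ∀ t ∈ Set.Icc (0 : ℝ) T, 0 ≤ C t)
    (hSnn : ∀ t ∈ Set.Icc (0 : ℝ) T, 0 ≤ S t)
    (hC0 : C 0 = 1) (hS0 : S 0 = 0) (hCT : C T = 0) :
    ∀ t₀ ∈ Set.Icc (0 : ℝ) T,
      (1 / 2) * S t₀ * C t₀ + (∫ u in (0 : ℝ)..t₀, S u ^ p) = t₀ / 2 := by
  have hp0 : (0:ℝ) < p := lt_of_lt_of_le one_pos hp
  have hpne : p ≠ 0 := ne_of_gt hp0
  -- x^(p-1) * x = x^p for x ≥ 0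
  have hmul : ∀ x : ℝ, 0 ≤ x → x ^ (p - 1) * x = x ^ p := by
    intro x hx
    rcases eq_or_lt_of_le hx with h | h
    · rw [← h, Real.zero_rpow hpne, mul_zero]
    · rw [← Real.rpow_add_one h.ne']
      norm_num
  -- derivatives of t ↦ C t ^ p and t ↦ S t ^ p
  have hCp : ∀ x : ℝ, HasDerivAt (fun t => C t ^ p) (p * C x ^ (p - 1) * deriv C x) x :=
    fun x => (Real.hasDerivAt_rpow_const (Or.inr hp)).comp x (hCdiff x).hasDerivAt
  have hSp : ∀ x : ℝ, HasDerivAt (fun t => S t ^ p) (p * S x ^ (p - 1) * deriv S x) x :=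
    fun x => (Real.hasDerivAt_rpow_const (Or.inr hp)).comp x (hSdiff x).hasDerivAt
  -- pythagorean identity
  have hpyth : ∀ x ∈ Set.Icc (0:ℝ) T, C x ^ p + S x ^ p = 1 := by
    have hconst := constant_of_has_deriv_right_zero
      (f := fun t => C t ^ p + S t ^ p) (a := 0) (b := T)
      (fun x _ => ((hCp x).add (hSp x)).continuousAt.continuousWithinAt)
      (fun x hx => by
        have h := ((hCp x).add (hSp x))
        rw [hC' x (Set.mem_Icc_of_Ico hx), hS' x (Set.mem_Icc_of_Ico hx)] at h
        have : p * C x ^ (p - 1) * -S x ^ (p - 1) + p * S x ^ (p - 1) * C x ^ (p - 1) = 0 := by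
          ring
        rw [this] at h
        exact h.hasDerivWithinAt)
    intro x hx
    have h2 := hconst x hx
    simp only [hS0, hC0, Real.one_rpow, Real.zero_rpow hpne, add_zero] at h2
    exact h2
  -- the primitive
  have hcontSp : Continuous fun u => S u ^ p :=
    (Real.continuous_rpow_const (le_of_lt hp0)).comp hSdiff.continuous
  have hInt : ∀ x : ℝ, HasDerivAt (fun t => ∫ u in (0:ℝ)..t, S u ^ p) (S x ^ p) x := by
    intro x
    exact intervalIntegral.integral_hasDerivAt_right
      (hcontSp.intervalIntegrable 0 x)
      (hcontSp.stronglyMeasurableAtFilter _ _)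
      hcontSp.continuousAt
  -- define H and show it is constant 0
  set H : ℝ → ℝ := fun t => (1/2) * S t * C t + (∫ u in (0:ℝ)..t, S u ^ p) - t/2 with hH
  have hHderiv : ∀ x ∈ Set.Icc (0:ℝ) T, HasDerivAt H 0 x := by
    intro x hx
    have h1 : HasDerivAt (fun t => (1/2) * S t * C t)
        ((1/2) * deriv S x * C x + (1/2) * S x * deriv C x) x := by
      have := ((hSdiff x).hasDerivAt.const_mul (1/2)).mul (hCdiff x).hasDerivAt
      exact this
    have h2 := (h1.add (hInt x)).sub ((hasDerivAt_id x).const_mul (1/2:ℝ))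
    have hval : (1/2) * deriv S x * C x + (1/2) * S x * deriv C x + S x ^ p - 1/2 * 1 = 0 := by
      rw [hC' x hx, hS' x hx, mul_assoc (1/2) (C x ^ (p-1)) (C x)]
      rw [hmul _ (hCnn x hx)]
      have : (1/2) * S x * -S x ^ (p - 1) = -(1/2) * (S x ^ (p-1) * S x) := by ring
      rw [this, hmul _ (hSnn x hx)]
      have := hpyth x hx
      ring_nf
      ring_nf at this
      linarith
    rw [hval] at h2
    -- h2 : HasDerivAt (fun t => ... - 1/2 * t) 0 x ; match with H
    suffices hHeq : H = (((fun t => 1 / 2 * S t * C t) + fun t => ∫ (u : ℝ) in (0:ℝ)..t, S u ^ p) - fun y => 1 / 2 * id y) by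
      rw [hHeq]; exact h2
    funext t
    simp [hH]
    ring
  have hHconst := constant_of_has_deriv_right_zero (f := H) (a := 0) (b := T)
    (fun x hx => (hHderiv x hx).continuousAt.continuousWithinAt)
    (fun x hx => (hHderiv x (Set.mem_Icc_of_Ico hx)).hasDerivWithinAt)
  intro t₀ ht₀
  have h0 : H 0 = 0 := by
    simp [hH, hS0]
  have := hHconst t₀ ht₀
  rw [h0] at this
  simp only [hH] at this
  linarith
end

section
/- Under the squigonometric hypotheses with p > 1, for every real q > 0: the function t ↦ (C(t)^((p-1)·q) + S(t)^((p-1)·q))^(1/q) equals 1 for all t ∈ [0,T] if and only if (p-1)·q = p. -/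
/-!
Differentiating `C ^ p + S ^ p` along the system gives `0`, so the curve stays on the unit
`p`-circle; hence the density is `1 ^ (1 / q) = 1` when `(p - 1) * q = p`. Conversely, at a time
where `C = 1 / 2` both coordinates lie in `(0, 1)`, and for such `a, b` the map
`r ↦ a ^ r + b ^ r` is strictly decreasing, so `a ^ r + b ^ r = 1 = a ^ p + b ^ p` forces `r = p`.
-/

open Set

theorem squigonometric_rpow_add_rpow_eq_one {p T : ℝ} {C S : ℝ → ℝ} (hp : 1 ≤ p)
    (hCdiff : Differentiable ℝ C) (hSdiff : Differentiable ℝ S)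
    (hC' : ∀ t ∈ Icc (0 : ℝ) T, deriv C t = -(S t ^ (p - 1)))
    (hS' : ∀ t ∈ Icc (0 : ℝ) T, deriv S t = C t ^ (p - 1))
    (hC0 : C 0 = 1) (hS0 : S 0 = 0) :
    ∀ t ∈ Icc (0 : ℝ) T, C t ^ p + S t ^ p = 1 := by
  have hcont : ContinuousOn (fun t => C t ^ p + S t ^ p) (Icc 0 T) :=
    ((hCdiff.continuous.rpow_const fun _ => Or.inr (by linarith)).add
      (hSdiff.continuous.rpow_const fun _ => Or.inr (by linarith))).continuousOn
  have hderiv : ∀ t ∈ Ico (0 : ℝ) T,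
      HasDerivWithinAt (fun t => C t ^ p + S t ^ p) 0 (Ici t) t := by
    intro t ht
    have hsum := ((Real.hasDerivAt_rpow_const (x := C t) (Or.inr hp)).comp t
      (hCdiff t).hasDerivAt).add
      ((Real.hasDerivAt_rpow_const (x := S t) (Or.inr hp)).comp t (hSdiff t).hasDerivAt)
    rw [hC' t (Ico_subset_Icc_self ht), hS' t (Ico_subset_Icc_self ht)] at hsum
    exact (hsum.congr_deriv (by ring)).hasDerivWithinAt
  intro t ht
  rw [constant_of_has_deriv_right_zero hcont hderiv t ht, hC0, hS0, Real.one_rpow,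
    Real.zero_rpow (by linarith), add_zero]

theorem mem_Ioo_of_rpow_add_rpow_eq_one {a b p : ℝ} (ha : a ∈ Ioo 0 1) (hb : 0 ≤ b)
    (hp : 0 < p) (h : a ^ p + b ^ p = 1) : b ∈ Ioo 0 1 := by
  have hap₀ : 0 < a ^ p := Real.rpow_pos_of_pos ha.1 p
  have hap₁ : a ^ p < 1 := Real.rpow_lt_one ha.1.le ha.2 hp
  refine ⟨hb.lt_of_ne ?_, ?_⟩
  · rintro rfl
    rw [Real.zero_rpow hp.ne', add_zero] at h
    exact hap₁.ne h
  · by_contra! hb₁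
    have := Real.one_le_rpow hb₁ hp.le
    linarith

theorem rpow_add_rpow_right_injective {a b : ℝ} (ha : a ∈ Ioo 0 1) (hb : b ∈ Ioo 0 1) :
    Function.Injective fun r : ℝ => a ^ r + b ^ r :=
  ((Real.strictAnti_rpow_of_base_lt_one ha.1 ha.2).add
    (Real.strictAnti_rpow_of_base_lt_one hb.1 hb.2)).injective

theorem Real.rpow_eq_one_iff_of_nonneg {x y : ℝ} (hx : 0 ≤ x) (hy : y ≠ 0) :
    x ^ y = 1 ↔ x = 1 := by
  conv_lhs => rw [← Real.one_rpow y]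
  exact Real.rpow_left_inj hx zero_le_one hy

theorem arc_length_density_constant_iff_general
    (p T : ℝ) (C S : ℝ → ℝ)
    (hp : 1 < p) (hT : 0 < T)
    (hCdiff : Differentiable ℝ C) (hSdiff : Differentiable ℝ S)
    (hC' : ∀ t ∈ Set.Icc (0 : ℝ) T, deriv C t = -(S t ^ (p - 1)))
    (hS' : ∀ t ∈ Set.Icc (0 : ℝ) T, deriv S t = C t ^ (p - 1))
    (hSnn : ∀ t ∈ Set.Icc (0 : ℝ) T, 0 ≤ S t)
    (hC0 : C 0 = 1) (hS0 : S 0 = 0) (hCT : C T = 0) :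
    ∀ q : ℝ, 0 < q →
      ((∀ t ∈ Set.Icc (0 : ℝ) T,
          (C t ^ ((p - 1) * q) + S t ^ ((p - 1) * q)) ^ (1 / q) = 1)
        ↔ (p - 1) * q = p) := by
  intro q hq
  have hcircle := squigonometric_rpow_add_rpow_eq_one hp.le hCdiff hSdiff hC' hS' hC0 hS0
  refine ⟨fun hdensity => ?_, fun hr t ht => by rw [hr, hcircle t ht, Real.one_rpow]⟩
  have hhalf : (1 / 2 : ℝ) ∈ Ioo 0 1 := ⟨by norm_num, by norm_num⟩
  obtain ⟨t₀, ht₀, hCt₀⟩ : ∃ t ∈ Icc 0 T, C t = 1 / 2 :=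
    intermediate_value_Icc' hT.le hCdiff.continuous.continuousOn
      (by rw [hC0, hCT]; exact Ioo_subset_Icc_self hhalf)
  have hcircle₀ := hcircle t₀ ht₀
  have hdensity₀ := hdensity t₀ ht₀
  rw [hCt₀] at hcircle₀ hdensity₀
  have hS₀ := mem_Ioo_of_rpow_add_rpow_eq_one hhalf (hSnn t₀ ht₀) (by linarith) hcircle₀
  rw [Real.rpow_eq_one_iff_of_nonneg (add_nonneg (by positivity) (Real.rpow_nonneg hS₀.1.le _))
    (one_div_ne_zero hq.ne')] at hdensity₀
  exact rpow_add_rpow_right_injective hhalf hS₀ (hdensity₀.trans hcircle₀.symm)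

/-- Under the squigonometric hypotheses with `p > 1`, for every `q > 0`, the
`q`-norm arc-length density `(C^((p-1)q) + S^((p-1)q))^(1/q)` is identically `1`
on `[0,T]` if and only if `(p-1)·q = p`. -/
theorem arc_length_density_constant_iff
    (p T : ℝ) (C S : ℝ → ℝ)
    (hp : 1 < p) (hT : 0 < T)
    (hCdiff : Differentiable ℝ C) (hSdiff : Differentiable ℝ S)
    (hC' : ∀ t ∈ Set.Icc (0 : ℝ) T, deriv C t = -(S t ^ (p - 1)))
    (hS' : ∀ t ∈ Set.Icc (0 : ℝ) T, deriv S t = C t ^ (p - 1))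
    (hCnn : ∀ t ∈ Set.Icc (0 : ℝ) T, 0 ≤ C t)
    (hSnn : ∀ t ∈ Set.Icc (0 : ℝ) T, 0 ≤ S t)
    (hC0 : C 0 = 1) (hS0 : S 0 = 0) (hCT : C T = 0) :
    ∀ q : ℝ, 0 < q →
      ((∀ t ∈ Set.Icc (0 : ℝ) T,
          (C t ^ ((p - 1) * q) + S t ^ ((p - 1) * q)) ^ (1 / q) = 1)
        ↔ (p - 1) * q = p) :=
  arc_length_density_constant_iff_general p T C S hp hT hCdiff hSdiff hC' hS' hSnn hC0 hS0 hCT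
end

section
/- Under the squigonometric hypotheses, define the cumulative p-length L(t) := ∫₀^t (C(u)^((p-1)·p) + S(u)^((p-1)·p))^(1/p) du for t ∈ [0,T]. Then the relative area and the relative p-length agree, i.e. T·L(t) = t·L(T) for all t ∈ [0,T], if and only if p = 1 or p = 2. -/
open Set

/-- Under the squigonometric hypotheses, the relative area and the relative
`p`-length agree on `[0,T]`, i.e. `T·L(t) = t·L(T)` for the cumulative `p`-length
`L(t) = ∫₀^t (C^((p-1)p) + S^((p-1)p))^(1/p)`, if and only if `p = 1` or `p = 2`. -/
theorem relative_area_eq_relative_p_length_iff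
    (p T : ℝ) (C S : ℝ → ℝ)
    (hp : 1 ≤ p) (hT : 0 < T)
    (hCdiff : Differentiable ℝ C) (hSdiff : Differentiable ℝ S)
    (hC' : ∀ t ∈ Set.Icc (0 : ℝ) T, deriv C t = -(S t ^ (p - 1)))
    (hS' : ∀ t ∈ Set.Icc (0 : ℝ) T, deriv S t = C t ^ (p - 1))
    (hCnn : ∀ t ∈ Set.Icc (0 : ℝ) T, 0 ≤ C t)
    (hSnn : ∀ t ∈ Set.Icc (0 : ℝ) T, 0 ≤ S t)
    (hC0 : C 0 = 1) (hS0 : S 0 = 0) (hCT : C T = 0) :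
    (∀ t ∈ Set.Icc (0 : ℝ) T,
        T * (∫ u in (0 : ℝ)..t,
              (C u ^ ((p - 1) * p) + S u ^ ((p - 1) * p)) ^ (1 / p))
          = t * (∫ u in (0 : ℝ)..T,
              (C u ^ ((p - 1) * p) + S u ^ ((p - 1) * p)) ^ (1 / p)))
      ↔ (p = 1 ∨ p = 2) := by
  have hp0 : (0 : ℝ) < p := lt_of_lt_of_le one_pos hp
  -- Pythagorean identity: C^p + S^p = 1 on [0,T]
  have pyth : ∀ t ∈ Icc (0 : ℝ) T, C t ^ p + S t ^ p = 1 := by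
    have key : ∀ t ∈ Icc (0 : ℝ) T,
        (fun t => C t ^ p + S t ^ p) t = (fun t => C t ^ p + S t ^ p) 0 := by
      apply constant_of_has_deriv_right_zero
      · exact ((hCdiff.continuous.rpow_const fun x => Or.inr hp0.le).add
          (hSdiff.continuous.rpow_const fun x => Or.inr hp0.le)).continuousOn
      · intro x hx
        have hx' : x ∈ Icc (0 : ℝ) T := Ico_subset_Icc_self hx
        have h1 : HasDerivAt (fun t => C t ^ p) (deriv C x * p * C x ^ (p - 1)) x :=
          (hCdiff x).hasDerivAt.rpow_const (Or.inr hp)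
        have h2 : HasDerivAt (fun t => S t ^ p) (deriv S x * p * S x ^ (p - 1)) x :=
          (hSdiff x).hasDerivAt.rpow_const (Or.inr hp)
        have h3 := h1.add h2
        rw [hC' x hx', hS' x hx'] at h3
        have h4 : -S x ^ (p - 1) * p * C x ^ (p - 1) + C x ^ (p - 1) * p * S x ^ (p - 1)
            = 0 := by ring
        rw [h4] at h3
        exact h3.hasDerivWithinAt
    intro t ht
    have h := key t ht
    simpa [hC0, hS0, Real.one_rpow, Real.zero_rpow hp0.ne'] using h
  constructor
  · -- forward direction
    intro H
    by_cases hp1 : p = 1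
    · exact Or.inl hp1
    right
    have hp1' : 1 < p := lt_of_le_of_ne hp (Ne.symm hp1)
    set a : ℝ := (p - 1) * p with ha_def
    have ha : 0 < a := mul_pos (by linarith) hp0
    set g : ℝ → ℝ := fun u => (C u ^ a + S u ^ a) ^ (1 / p) with hg_def
    have hgc : Continuous g := by
      apply Continuous.rpow_const
      · exact (hCdiff.continuous.rpow_const fun x => Or.inr ha.le).add
          (hSdiff.continuous.rpow_const fun x => Or.inr ha.le)
      · intro x; right; positivity
    set LT : ℝ := ∫ u in (0 : ℝ)..T, g u with hLT_def
    have hH : ∀ t ∈ Icc (0 : ℝ) T, T * (∫ u in (0 : ℝ)..t, g u) = t * LT := H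
    -- derivative of the cumulative length
    have hLd : ∀ t : ℝ, HasDerivAt (fun t => ∫ u in (0 : ℝ)..t, g u) (g t) t := fun t =>
      intervalIntegral.integral_hasDerivAt_right (hgc.intervalIntegrable 0 t)
        (hgc.stronglyMeasurable.stronglyMeasurableAtFilter)
        hgc.continuousAt
    -- on the interior, T * g t = LT
    have hconst : ∀ t ∈ Ioo (0 : ℝ) T, T * g t = LT := by
      intro t ht
      have hmem : Icc (0 : ℝ) T ∈ nhds t := Icc_mem_nhds ht.1 ht.2
      have heq : (fun t => T * (∫ u in (0 : ℝ)..t, g u) - t * LT) =ᶠ[nhds t]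
          (fun _ => (0 : ℝ)) := by
        filter_upwards [hmem] with x hx
        rw [hH x hx]; ring
      have hderiv : HasDerivAt (fun t => T * (∫ u in (0 : ℝ)..t, g u) - t * LT)
          (T * g t - LT) t := by
        have h : HasDerivAt (fun t => T * (∫ u in (0 : ℝ)..t, g u) - t * LT)
            (T * g t - 1 * LT) t := ((hLd t).const_mul T).sub ((hasDerivAt_id t).mul_const LT)
        simpa using h
      have h0 : deriv (fun t => T * (∫ u in (0 : ℝ)..t, g u) - t * LT) t = 0 := by
        rw [heq.deriv_eq]; simp
      have h1 := hderiv.deriv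
      rw [h0] at h1
      linarith
    -- extend to the closed interval by continuity
    have hclos : EqOn (fun t => T * g t) (fun _ => LT) (Icc (0 : ℝ) T) := by
      have h1 : EqOn (fun t => T * g t) (fun _ => LT) (Ioo (0 : ℝ) T) := fun t ht =>
        hconst t ht
      have h2 := h1.closure (continuous_const.mul hgc) continuous_const
      rwa [closure_Ioo hT.ne] at h2
    have hg0 : g 0 = 1 := by
      simp [hg_def, hC0, hS0, Real.one_rpow, Real.zero_rpow ha.ne', Real.one_rpow]
    have hLT : LT = T := by
      have h := hclos (left_mem_Icc.2 hT.le)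
      simp only [hg0, mul_one] at h
      exact h.symm
    -- interior point where C = S = (1/2)^(1/p)
    set v : ℝ := (1 / 2 : ℝ) ^ (1 / p) with hv_def
    have hv0 : 0 < v := Real.rpow_pos_of_pos (by norm_num) _
    have hv1 : v < 1 := Real.rpow_lt_one (by norm_num) (by norm_num) (by positivity)
    obtain ⟨t₀, ht₀, hCt₀⟩ : ∃ t₀ ∈ Icc (0 : ℝ) T, C t₀ = v := by
      have hsub := intermediate_value_Icc' hT.le hCdiff.continuous.continuousOn
      have hvmem : v ∈ Icc (C T) (C 0) := by
        rw [hCT, hC0]; exact ⟨hv0.le, hv1.le⟩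
      obtain ⟨t₀, ht₀, h⟩ := hsub hvmem
      exact ⟨t₀, ht₀, h⟩
    have hexp : 1 / p * p = 1 := by field_simp
    have hvp : v ^ p = 1 / 2 := by
      rw [hv_def, ← Real.rpow_mul (by norm_num), hexp, Real.rpow_one]
    have hSt₀ : S t₀ = v := by
      have h1 : S t₀ ^ p = 1 / 2 := by
        have := pyth t₀ ht₀
        rw [hCt₀, hvp] at this
        linarith
      have h2 : (S t₀ ^ p) ^ (1 / p) = S t₀ := by
        rw [← Real.rpow_mul (hSnn t₀ ht₀), mul_comm, hexp, Real.rpow_one]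
      rw [← h2, h1, ← hv_def]
    -- value of g at t₀
    have hva : v ^ a = (1 / 2 : ℝ) ^ (p - 1) := by
      rw [hv_def, ← Real.rpow_mul (by norm_num)]
      congr 1
      field_simp [ha_def]
      rw [ha_def]; ring
    have hgt₀ : g t₀ = 1 := by
      have h := hclos ht₀
      simp only at h
      have h2 : T * g t₀ = T * 1 := by rw [h, hLT, mul_one]
      exact mul_left_cancel₀ hT.ne' h2
    have hkey : ((2 : ℝ) * (1 / 2 : ℝ) ^ (p - 1)) ^ (1 / p) = 1 := by
      have hb : (2 : ℝ) * (1 / 2 : ℝ) ^ (p - 1) = v ^ a + v ^ a := by rw [hva]; ring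
      have hgv : g t₀ = (v ^ a + v ^ a) ^ (1 / p) := by
        simp only [hg_def, hCt₀, hSt₀]
      rw [hb, ← hgv, hgt₀]
    -- conclude p = 2
    have hbase : (2 : ℝ) * (1 / 2 : ℝ) ^ (p - 1) = 1 := by
      have hBpos : (0 : ℝ) < 2 * (1 / 2 : ℝ) ^ (p - 1) := by positivity
      have h1 : (((2 : ℝ) * (1 / 2 : ℝ) ^ (p - 1)) ^ (1 / p)) ^ p
          = (2 : ℝ) * (1 / 2 : ℝ) ^ (p - 1) := by
        rw [← Real.rpow_mul hBpos.le, hexp, Real.rpow_one]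
      rw [hkey, Real.one_rpow] at h1
      exact h1.symm
    have hhalf : (1 / 2 : ℝ) ^ (p - 1) = (1 / 2 : ℝ) ^ (1 : ℝ) := by
      rw [Real.rpow_one]; linarith
    have hlog := congrArg Real.log hhalf
    rw [Real.log_rpow (by norm_num), Real.log_rpow (by norm_num)] at hlog
    have hlhalf : Real.log (1 / 2 : ℝ) ≠ 0 :=
      ne_of_lt (Real.log_neg (by norm_num) (by norm_num))
    have hfin := mul_right_cancel₀ hlhalf hlog
    linarith
  · -- backward direction
    rintro (rfl | rfl) t ht
    · -- p = 1
      have hint : ∀ s : ℝ, (∫ u in (0 : ℝ)..s,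
          (C u ^ (((1 : ℝ) - 1) * 1) + S u ^ (((1 : ℝ) - 1) * 1)) ^ (1 / (1 : ℝ))) = 2 * s := by
        intro s
        have : ∀ u : ℝ, (C u ^ (((1 : ℝ) - 1) * 1) + S u ^ (((1 : ℝ) - 1) * 1)) ^ (1 / (1 : ℝ))
            = 2 := by
          intro u
          norm_num
        simp only [this, intervalIntegral.integral_const, smul_eq_mul]
        ring
      rw [hint t, hint T]; ring
    · -- p = 2
      have hint : ∀ s ∈ Icc (0 : ℝ) T, (∫ u in (0 : ℝ)..s,
          (C u ^ (((2 : ℝ) - 1) * 2) + S u ^ (((2 : ℝ) - 1) * 2)) ^ (1 / (2 : ℝ))) = s := by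
        intro s hs
        have heq : EqOn (fun u => (C u ^ (((2 : ℝ) - 1) * 2) + S u ^ (((2 : ℝ) - 1) * 2))
            ^ (1 / (2 : ℝ))) (fun _ => (1 : ℝ)) (uIcc (0 : ℝ) s) := by
          intro u hu
          rw [uIcc_of_le hs.1] at hu
          have hu' : u ∈ Icc (0 : ℝ) T := ⟨hu.1, hu.2.trans hs.2⟩
          have hpy := pyth u hu'
          simp only
          have h2 : ((2 : ℝ) - 1) * 2 = (2 : ℝ) := by norm_num
          rw [h2, hpy, Real.one_rpow]
        rw [intervalIntegral.integral_congr heq]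
        simp
      rw [hint t ht, hint T (right_mem_Icc.2 hT.le)]; ring
end

section
/- Under the squigonometric hypotheses, define the cumulative euclidean length L₂(t) := ∫₀^t (C(u)^(2·(p-1)) + S(u)^(2·(p-1)))^(1/2) du for t ∈ [0,T]. Then the relative area and the relative euclidean length agree, i.e. T·L₂(t) = t·L₂(T) for all t ∈ [0,T], if and only if p = 1 or p = 2. -/
open Set Real intervalIntegral

/-- Under the squigonometric hypotheses, the relative area and the relative
euclidean length agree on `[0,T]`, i.e. `T·L₂(t) = t·L₂(T)` for the cumulative
euclidean length `L₂(t) = ∫₀^t (C^(2(p-1)) + S^(2(p-1)))^(1/2)`, if and only if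
`p = 1` or `p = 2`. -/
theorem relative_area_eq_relative_euclidean_length_iff
    (p T : ℝ) (C S : ℝ → ℝ)
    (hp : 1 ≤ p) (hT : 0 < T)
    (hCdiff : Differentiable ℝ C) (hSdiff : Differentiable ℝ S)
    (hC' : ∀ t ∈ Set.Icc (0 : ℝ) T, deriv C t = -(S t ^ (p - 1)))
    (hS' : ∀ t ∈ Set.Icc (0 : ℝ) T, deriv S t = C t ^ (p - 1))
    (hCnn : ∀ t ∈ Set.Icc (0 : ℝ) T, 0 ≤ C t)
    (hSnn : ∀ t ∈ Set.Icc (0 : ℝ) T, 0 ≤ S t)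
    (hC0 : C 0 = 1) (hS0 : S 0 = 0) (hCT : C T = 0) :
    (∀ t ∈ Set.Icc (0 : ℝ) T,
        T * (∫ u in (0 : ℝ)..t,
              (C u ^ (2 * (p - 1)) + S u ^ (2 * (p - 1))) ^ ((1 : ℝ) / 2))
          = t * (∫ u in (0 : ℝ)..T,
              (C u ^ (2 * (p - 1)) + S u ^ (2 * (p - 1))) ^ ((1 : ℝ) / 2)))
      ↔ (p = 1 ∨ p = 2) := by
  have hp0 : p ≠ 0 := by linarith
  -- continuity of rpow with nonnegative exponent
  have hrpow : ∀ q : ℝ, 0 ≤ q → Continuous (fun x : ℝ => x ^ q) := by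
    intro q hq
    exact continuous_iff_continuousAt.2 fun x =>
      Real.continuousAt_rpow_const x q (Or.inr hq)
  -- Pythagorean identity: C^p + S^p = 1 on [0,T]
  have hpyth : ∀ t ∈ Set.Icc (0 : ℝ) T, C t ^ p + S t ^ p = 1 := by
    intro t ht
    set h : ℝ → ℝ := fun t => C t ^ p + S t ^ p with hh
    have hderiv : ∀ x ∈ Set.Ico (0 : ℝ) T, HasDerivWithinAt h 0 (Set.Ici x) x := by
      intro x hx
      have hxI : x ∈ Set.Icc (0 : ℝ) T := ⟨hx.1, hx.2.le⟩
      have h1 : HasDerivAt (fun t => C t ^ p)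
          (p * C x ^ (p - 1) * deriv C x) x := by
        have := (Real.hasDerivAt_rpow_const (x := C x) (p := p)
          (Or.inr hp)).comp x (hCdiff x).hasDerivAt
        simpa [Function.comp_def, mul_comm, mul_assoc, mul_left_comm] using this
      have h2 : HasDerivAt (fun t => S t ^ p)
          (p * S x ^ (p - 1) * deriv S x) x := by
        have := (Real.hasDerivAt_rpow_const (x := S x) (p := p)
          (Or.inr hp)).comp x (hSdiff x).hasDerivAt
        simpa [Function.comp_def, mul_comm, mul_assoc, mul_left_comm] using this
      have h3 : HasDerivAt h
          (p * C x ^ (p - 1) * deriv C x + p * S x ^ (p - 1) * deriv S x) x :=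
        h1.add h2
      have hz : p * C x ^ (p - 1) * deriv C x + p * S x ^ (p - 1) * deriv S x = 0 := by
        rw [hC' x hxI, hS' x hxI]; ring
      rw [hz] at h3
      exact h3.hasDerivWithinAt
    have hcont : ContinuousOn h (Set.Icc 0 T) := by
      apply Continuous.continuousOn
      exact ((hrpow p (by linarith)).comp hCdiff.continuous).add
        ((hrpow p (by linarith)).comp hSdiff.continuous)
    have hconst := constant_of_has_deriv_right_zero hcont hderiv t ht
    have h2 : C t ^ p + S t ^ p = C 0 ^ p + S 0 ^ p := hconst
    rw [h2, hC0, hS0, Real.one_rpow, Real.zero_rpow hp0]; norm_num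
  -- notation for integrand and cumulative length
  set a : ℝ := 2 * (p - 1) with ha
  have ha0 : 0 ≤ a := by simp only [ha]; linarith
  set f : ℝ → ℝ := fun u => (C u ^ a + S u ^ a) ^ ((1 : ℝ) / 2) with hf
  have hfc : Continuous f := by
    apply (hrpow (1/2) (by norm_num)).comp
    exact ((hrpow a ha0).comp hCdiff.continuous).add
      ((hrpow a ha0).comp hSdiff.continuous)
  set L : ℝ → ℝ := fun t => ∫ u in (0:ℝ)..t, f u with hL
  -- S T = 1
  have hST : S T = 1 := by
    have h1 := hpyth T ⟨le_of_lt hT, le_refl T⟩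
    rw [hCT, Real.zero_rpow hp0, zero_add] at h1
    have h2 : (S T ^ p) ^ (p⁻¹ : ℝ) = 1 := by rw [h1, Real.one_rpow]
    rwa [← Real.rpow_mul (hSnn T ⟨hT.le, le_refl T⟩), mul_inv_cancel₀ hp0,
      Real.rpow_one] at h2
  constructor
  · intro hEq
    by_cases hp1 : p = 1
    · exact Or.inl hp1
    have hp1' : 1 < p := lt_of_le_of_ne hp (Ne.symm hp1)
    have ha0' : a ≠ 0 := by simp only [ha]; intro h; nlinarith
    -- derivative argument: T * f t = L T on (0,T)
    have hopen : ∀ t ∈ Set.Ioo (0 : ℝ) T, T * f t = L T := by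
      intro t ht
      have hLd : HasDerivAt L (f t) t :=
        intervalIntegral.integral_hasDerivAt_right (hfc.intervalIntegrable 0 t)
          (hfc.stronglyMeasurable.stronglyMeasurableAtFilter) hfc.continuousAt
      have h1 : HasDerivAt (fun s => T * L s) (T * f t) t := hLd.const_mul T
      have hEv : (fun s => s * L T) =ᶠ[nhds t] fun s => T * L s := by
        filter_upwards [Icc_mem_nhds ht.1 ht.2] with s hs
        exact (hEq s hs).symm
      have hid : HasDerivAt (fun s => s * L T) (L T) t := by
        simpa using (hasDerivAt_id t).mul_const (L T)
      have h2 : HasDerivAt (fun s => T * L s) (L T) t :=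
        hid.congr_of_eventuallyEq hEv.symm
      exact h1.unique h2
    -- extend to the closed interval by continuity
    have hclosed : ∀ t ∈ Set.Icc (0 : ℝ) T, T * f t = L T := by
      have heq : Set.EqOn (fun t => T * f t) (fun _ => L T) (closure (Set.Ioo (0:ℝ) T)) :=
        Set.EqOn.closure hopen (continuous_const.mul hfc) continuous_const
      rw [closure_Ioo hT.ne] at heq
      exact fun t ht => heq ht
    -- hence f is constant, equal to f 0 = 1
    have hf0 : f 0 = 1 := by
      simp [hf, hC0, hS0, Real.one_rpow, Real.zero_rpow ha0', add_zero]
    have hsum : ∀ t ∈ Set.Icc (0 : ℝ) T, C t ^ a + S t ^ a = 1 := by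
      intro t ht
      have h1 : T * f t = T * f 0 := by
        rw [hclosed t ht, hclosed 0 ⟨le_refl 0, hT.le⟩]
      have h2 : f t = 1 := by
        rw [hf0, mul_one] at h1
        have := mul_left_cancel₀ hT.ne' (h1.trans (mul_one T).symm)
        exact this
      have hx : 0 ≤ C t ^ a + S t ^ a :=
        add_nonneg (Real.rpow_nonneg (hCnn t ht) a) (Real.rpow_nonneg (hSnn t ht) a)
      have h3 : (C t ^ a + S t ^ a) ^ ((1:ℝ)/2 * 2) = 1 := by
        rw [Real.rpow_mul hx]
        rw [show ((C t ^ a + S t ^ a) ^ ((1:ℝ)/2)) = f t from rfl, h2, Real.one_rpow]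
      rwa [show (1:ℝ)/2 * 2 = 1 by norm_num, Real.rpow_one] at h3
    -- find t* with C t* = S t*
    have hIVT : ∃ t ∈ Set.Icc (0:ℝ) T, C t = S t := by
      have hgc : ContinuousOn (fun t => C t - S t) (Set.Icc 0 T) :=
        (hCdiff.continuous.sub hSdiff.continuous).continuousOn
      have := intermediate_value_Icc' hT.le hgc
      have h0 : (0:ℝ) ∈ Set.Icc (C T - S T) (C 0 - S 0) := by
        rw [hC0, hS0, hCT, hST]; norm_num
      obtain ⟨t, htI, hteq⟩ := this h0
      have hteq' : C t - S t = 0 := hteq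
      exact ⟨t, htI, by linarith⟩
    obtain ⟨t, htI, htCS⟩ := hIVT
    set c := C t with hc
    have hcp : c ^ p + c ^ p = 1 := by have := hpyth t htI; rwa [← htCS] at this
    have hca : c ^ a + c ^ a = 1 := by have := hsum t htI; rwa [← htCS] at this
    have hcnn : 0 ≤ c := hCnn t htI
    have hcpos : 0 < c := by
      rcases hcnn.lt_or_eq with h | h
      · exact h
      · exfalso; rw [← h, Real.zero_rpow hp0] at hcp; norm_num at hcp
    have hcp2 : c ^ p = 1/2 := by linarith
    have hca2 : c ^ a = 1/2 := by linarith
    have hlog : p * Real.log c = a * Real.log c := by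
      rw [← Real.log_rpow hcpos, ← Real.log_rpow hcpos, hcp2, hca2]
    have hlogc : Real.log c ≠ 0 := by
      intro h0
      have : c = 1 := by
        have := Real.exp_log hcpos
        rw [h0] at this; simpa [Real.exp_zero] using this.symm
      rw [this, Real.one_rpow] at hcp2; norm_num at hcp2
    have hpa : p = a := by
      have : (p - a) * Real.log c = 0 := by linarith [hlog]
      rcases mul_eq_zero.1 this with h | h
      · linarith
      · exact absurd h hlogc
    right
    have h4 : p = 2 * (p - 1) := hpa.trans ha
    linarith
  · rintro (rfl | rfl)
    · -- p = 1 : integrand is constant √2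
      intro t ht
      have hfeq : ∀ u, f u = (2:ℝ) ^ ((1:ℝ)/2) := by
        intro u
        simp only [hf, ha]
        norm_num [Real.rpow_zero]
      have hint : ∀ s : ℝ, (∫ u in (0:ℝ)..s, f u) = s * (2:ℝ) ^ ((1:ℝ)/2) := by
        intro s
        rw [show (fun u => f u) = fun _ => (2:ℝ) ^ ((1:ℝ)/2) from funext hfeq]
        simp [intervalIntegral.integral_const, smul_eq_mul]
      show T * (∫ u in (0:ℝ)..t, f u) = t * (∫ u in (0:ℝ)..T, f u)
      rw [hint t, hint T]; ring
    · -- p = 2 : integrand is 1 on [0,T]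
      intro t ht
      have hone : ∀ s ∈ Set.Icc (0:ℝ) T, (∫ u in (0:ℝ)..s, f u) = s := by
        intro s hs
        have : (∫ u in (0:ℝ)..s, f u) = ∫ u in (0:ℝ)..s, (1:ℝ) := by
          apply intervalIntegral.integral_congr
          intro u hu
          rw [Set.uIcc_of_le hs.1] at hu
          have huI : u ∈ Set.Icc (0:ℝ) T := ⟨hu.1, hu.2.trans hs.2⟩
          have hpy := hpyth u huI
          have ha2 : a = 2 := by rw [ha]; norm_num
          show (C u ^ a + S u ^ a) ^ ((1:ℝ)/2) = 1
          rw [ha2, hpy, Real.one_rpow]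
        rw [this]; simp
      show T * (∫ u in (0:ℝ)..t, f u) = t * (∫ u in (0:ℝ)..T, f u)
      rw [hone t ht, hone T ⟨hT.le, le_refl T⟩]; ring
end

section
/- Under the squigonometric hypotheses, for every natural number n ≥ 2 and every t₀ ∈ [0,T]: ∫₀^{t₀} S(u)^(n+p-2) du + (1/n)·S(t₀)^(n-1)·C(t₀) = ((n-1)/n)·∫₀^{t₀} S(u)^(n-2) du. -/
/-- Under the squigonometric hypotheses, for every `n ≥ 2` and `t₀ ∈ [0,T]`:
`∫₀^{t₀} S^(n+p-2) + (1/n)·S(t₀)^(n-1)·C(t₀) = ((n-1)/n)·∫₀^{t₀} S^(n-2)`. -/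
theorem squigonometric_volume_identity
    (p T : ℝ) (C S : ℝ → ℝ)
    (hp : 1 ≤ p) (hT : 0 < T)
    (hCdiff : Differentiable ℝ C) (hSdiff : Differentiable ℝ S)
    (hC' : ∀ t ∈ Set.Icc (0 : ℝ) T, deriv C t = -(S t ^ (p - 1)))
    (hS' : ∀ t ∈ Set.Icc (0 : ℝ) T, deriv S t = C t ^ (p - 1))
    (hCnn : ∀ t ∈ Set.Icc (0 : ℝ) T, 0 ≤ C t)
    (hSnn : ∀ t ∈ Set.Icc (0 : ℝ) T, 0 ≤ S t)
    (hC0 : C 0 = 1) (hS0 : S 0 = 0) (hCT : C T = 0) :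
    ∀ n : ℕ, 2 ≤ n → ∀ t₀ ∈ Set.Icc (0 : ℝ) T,
      (∫ u in (0 : ℝ)..t₀, S u ^ ((n : ℝ) + p - 2))
          + (1 / (n : ℝ)) * S t₀ ^ ((n : ℝ) - 1) * C t₀
        = (((n : ℝ) - 1) / (n : ℝ)) * ∫ u in (0 : ℝ)..t₀, S u ^ ((n : ℝ) - 2) := by
  have hp0 : (0:ℝ) < p := lt_of_lt_of_le one_pos hp
  have hCd : ∀ t ∈ Set.Icc (0:ℝ) T, HasDerivAt C (-(S t ^ (p-1))) t := fun t ht => by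
    have := (hCdiff t).hasDerivAt; rwa [hC' t ht] at this
  have hSd : ∀ t ∈ Set.Icc (0:ℝ) T, HasDerivAt S (C t ^ (p-1)) t := fun t ht => by
    have := (hSdiff t).hasDerivAt; rwa [hS' t ht] at this
  -- Pythagorean identity
  have pyth : ∀ t ∈ Set.Icc (0:ℝ) T, C t ^ p + S t ^ p = 1 := by
    have key := constant_of_has_deriv_right_zero (f := fun t => C t ^ p + S t ^ p)
      (a := 0) (b := T)
      (by
        have : Continuous (fun t => C t ^ p + S t ^ p) :=
          ((Real.continuous_rpow_const hp0.le).comp hCdiff.continuous).add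
            ((Real.continuous_rpow_const hp0.le).comp hSdiff.continuous)
        exact this.continuousOn)
      (by
        intro t ht
        have ht' : t ∈ Set.Icc (0:ℝ) T := Set.Ico_subset_Icc_self ht
        have h1 : HasDerivAt (fun t => C t ^ p)
            (p * C t ^ (p-1) * (-(S t ^ (p-1)))) t :=
          (Real.hasDerivAt_rpow_const (Or.inr hp)).comp t (hCd t ht')
        have h2 : HasDerivAt (fun t => S t ^ p)
            (p * S t ^ (p-1) * (C t ^ (p-1))) t :=
          (Real.hasDerivAt_rpow_const (Or.inr hp)).comp t (hSd t ht')
        have h3 := h1.add h2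
        have : p * C t ^ (p-1) * (-(S t ^ (p-1))) + p * S t ^ (p-1) * (C t ^ (p-1)) = 0 := by
          ring
        rw [this] at h3
        exact h3.hasDerivWithinAt)
    intro t ht
    have := key t ht
    simpa [hC0, hS0, Real.one_rpow, Real.zero_rpow hp0.ne'] using this
  intro n hn t₀ ht₀
  have hn0 : (0:ℝ) < (n:ℝ) := by exact_mod_cast Nat.pos_of_ne_zero (by omega)
  have hn1 : (1:ℝ) ≤ (n:ℝ) - 1 := by
    have : (2:ℝ) ≤ (n:ℝ) := by exact_mod_cast hn
    linarith
  have hn2 : (0:ℝ) ≤ (n:ℝ) - 2 := by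
    have : (2:ℝ) ≤ (n:ℝ) := by exact_mod_cast hn
    linarith
  have hnp : (0:ℝ) < (n:ℝ) + p - 2 := by linarith
  have hone : ((n:ℝ)-1)/(n:ℝ) + 1/(n:ℝ) = 1 := by field_simp; ring
  set F : ℝ → ℝ := fun t => (1/(n:ℝ)) * (S t ^ ((n:ℝ)-1) * C t) with hF
  set g : ℝ → ℝ := fun t => (((n:ℝ)-1)/(n:ℝ)) * S t ^ ((n:ℝ)-2) - S t ^ ((n:ℝ)+p-2)
    with hg
  have hsub : Set.uIcc (0:ℝ) t₀ ⊆ Set.Icc 0 T := by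
    rw [Set.uIcc_of_le ht₀.1]
    exact Set.Icc_subset_Icc le_rfl ht₀.2
  have hFd : ∀ t ∈ Set.uIcc (0:ℝ) t₀, HasDerivAt F (g t) t := by
    intro t ht
    have ht' := hsub ht
    have h1 : HasDerivAt (fun t => S t ^ ((n:ℝ)-1))
        (((n:ℝ)-1) * S t ^ ((n:ℝ)-1-1) * (C t ^ (p-1))) t :=
      (Real.hasDerivAt_rpow_const (Or.inr hn1)).comp t (hSd t ht')
    rw [show (n:ℝ)-1-1 = (n:ℝ)-2 from by ring] at h1
    have h2 := (h1.mul (hCd t ht')).const_mul (1/(n:ℝ))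
    convert h2 using 1
    · rfl
    · rfl
    · rfl
    have hA := hCnn t ht'
    have hB := hSnn t ht'
    have hpy := pyth t ht'
    have e1 : C t ^ (p-1) * C t = C t ^ p := by
      rcases hA.eq_or_lt with h | h
      · simp [← h, Real.zero_rpow hp0.ne']
      · rw [show p = (p-1)+1 from by ring, Real.rpow_add h, Real.rpow_one]
        ring_nf
    have e2 : S t ^ ((n:ℝ)-1) * S t ^ (p-1) = S t ^ ((n:ℝ)+p-2) := by
      rcases hB.eq_or_lt with h | h
      · simp [← h, Real.zero_rpow hnp.ne',
          Real.zero_rpow (show (n:ℝ)-1 ≠ 0 from by linarith)]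
      · rw [← Real.rpow_add h]
        ring_nf
    have e3 : S t ^ ((n:ℝ)-2) * S t ^ p = S t ^ ((n:ℝ)+p-2) := by
      rcases hB.eq_or_lt with h | h
      · simp [← h, Real.zero_rpow hnp.ne', Real.zero_rpow hp0.ne']
      · rw [← Real.rpow_add h]
        ring_nf
    simp only [hg]
    linear_combination (-(((n:ℝ)-1)/(n:ℝ)) * S t ^ ((n:ℝ)-2)) * e1
      + (-(((n:ℝ)-1)/(n:ℝ)) * S t ^ ((n:ℝ)-2)) * hpy
      + (((n:ℝ)-1)/(n:ℝ)) * e3 + (1/(n:ℝ)) * e2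
      + S t ^ ((n:ℝ)+p-2) * hone
  have i1 : IntervalIntegrable (fun u => S u ^ ((n:ℝ)-2)) MeasureTheory.volume 0 t₀ :=
    ((Real.continuous_rpow_const hn2).comp hSdiff.continuous).intervalIntegrable 0 t₀
  have i2 : IntervalIntegrable (fun u => S u ^ ((n:ℝ)+p-2)) MeasureTheory.volume 0 t₀ :=
    ((Real.continuous_rpow_const hnp.le).comp hSdiff.continuous).intervalIntegrable 0 t₀
  have hgi : IntervalIntegrable g MeasureTheory.volume 0 t₀ := by
    simpa [hg] using (i1.const_mul (((n:ℝ)-1)/(n:ℝ))).sub i2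
  have hint := intervalIntegral.integral_eq_sub_of_hasDerivAt hFd hgi
  have hF0 : F 0 = 0 := by
    simp [hF, hS0, Real.zero_rpow (show (n:ℝ)-1 ≠ 0 from by linarith)]
  have hsplit : ∫ u in (0:ℝ)..t₀, g u
      = (((n:ℝ)-1)/(n:ℝ)) * (∫ u in (0:ℝ)..t₀, S u ^ ((n:ℝ)-2))
        - ∫ u in (0:ℝ)..t₀, S u ^ ((n:ℝ)+p-2) := by
    simp only [hg]
    rw [intervalIntegral.integral_sub (i1.const_mul _) i2,
      intervalIntegral.integral_const_mul]
  rw [hsplit, hF0, sub_zero, hF] at hint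
  have hassoc : (1/(n:ℝ)) * (S t₀ ^ ((n:ℝ)-1) * C t₀)
      = (1/(n:ℝ)) * S t₀ ^ ((n:ℝ)-1) * C t₀ := by ring
  linarith [hint, hassoc]
end

section
/- Under the squigonometric hypotheses, let n ≥ 2 be a natural number and define V(t) := ∫₀^t S(u)^(n-2) du and Σ(t) := ∫₀^t S(u)^(n-2)·(C(u)^((p-1)·p) + S(u)^((p-1)·p))^(1/p) du for t ∈ [0,T]. Then the relative hyper-volume and the relative hyper-p-area agree, i.e. Σ(t)·V(T) = V(t)·Σ(T) for all t ∈ [0,T], if and only if p = 1 or p = 2. -/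
open Set Filter MeasureTheory intervalIntegral

private lemma aux_sum_ne_one {a b r : ℝ} (ha0 : 0 < a) (hb0 : 0 < b)
    (hab : a + b = 1) (hr0 : 0 < r) (hr1 : r ≠ 1) : a ^ r + b ^ r ≠ 1 := by
  have ha1 : a < 1 := by linarith
  have hb1 : b < 1 := by linarith
  rcases lt_or_gt_of_ne hr1 with h | h
  · have h1 : a ^ (1 : ℝ) < a ^ r := Real.rpow_lt_rpow_of_exponent_gt ha0 ha1 h
    have h2 : b ^ (1 : ℝ) < b ^ r := Real.rpow_lt_rpow_of_exponent_gt hb0 hb1 h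
    rw [Real.rpow_one] at h1 h2
    intro hc; linarith
  · have h1 : a ^ r < a ^ (1 : ℝ) := Real.rpow_lt_rpow_of_exponent_gt ha0 ha1 h
    have h2 : b ^ r < b ^ (1 : ℝ) := Real.rpow_lt_rpow_of_exponent_gt hb0 hb1 h
    rw [Real.rpow_one] at h1 h2
    intro hc; linarith

/-- Under the squigonometric hypotheses, for `n ≥ 2`, the relative hyper-volume
`V(t) = ∫₀^t S^(n-2)` and the relative hyper-`p`-area
`Σ(t) = ∫₀^t S^(n-2)·(C^((p-1)p) + S^((p-1)p))^(1/p)` agree, i.e.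
`Σ(t)·V(T) = V(t)·Σ(T)` on `[0,T]`, if and only if `p = 1` or `p = 2`. -/
theorem relative_volume_eq_relative_p_area_iff
    (p T : ℝ) (C S : ℝ → ℝ)
    (hp : 1 ≤ p) (hT : 0 < T)
    (hCdiff : Differentiable ℝ C) (hSdiff : Differentiable ℝ S)
    (hC' : ∀ t ∈ Set.Icc (0 : ℝ) T, deriv C t = -(S t ^ (p - 1)))
    (hS' : ∀ t ∈ Set.Icc (0 : ℝ) T, deriv S t = C t ^ (p - 1))
    (hCnn : ∀ t ∈ Set.Icc (0 : ℝ) T, 0 ≤ C t)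
    (hSnn : ∀ t ∈ Set.Icc (0 : ℝ) T, 0 ≤ S t)
    (hC0 : C 0 = 1) (hS0 : S 0 = 0) (hCT : C T = 0)
    (n : ℕ) (hn : 2 ≤ n)
    (V Surf : ℝ → ℝ)
    (hV : ∀ t : ℝ, V t = ∫ u in (0 : ℝ)..t, S u ^ ((n : ℝ) - 2))
    (hSurf : ∀ t : ℝ, Surf t = ∫ u in (0 : ℝ)..t,
        S u ^ ((n : ℝ) - 2) * (C u ^ ((p - 1) * p) + S u ^ ((p - 1) * p)) ^ (1 / p)) :
    (∀ t ∈ Set.Icc (0 : ℝ) T, Surf t * V T = V t * Surf T) ↔ (p = 1 ∨ p = 2) := by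
  have hp0 : (0 : ℝ) < p := lt_of_lt_of_le one_pos hp
  have hCc : Continuous C := hCdiff.continuous
  have hSc : Continuous S := hSdiff.continuous
  -- Pythagorean identity
  have key : ∀ t ∈ Set.Icc (0 : ℝ) T, C t ^ p + S t ^ p = 1 := by
    have hcont : ContinuousOn (fun t => C t ^ p + S t ^ p) (Set.Icc 0 T) :=
      (((Real.continuous_rpow_const hp0.le).comp hCc).add
        ((Real.continuous_rpow_const hp0.le).comp hSc)).continuousOn
    have hconst := constant_of_has_deriv_right_zero (f := fun t => C t ^ p + S t ^ p)
      (a := 0) (b := T) hcont ?_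
    · intro t ht
      have h := hconst t ht
      rwa [hC0, hS0, Real.one_rpow, Real.zero_rpow hp0.ne', add_zero] at h
    · intro x hx
      have hx' : x ∈ Set.Icc (0 : ℝ) T := Set.Ico_subset_Icc_self hx
      have h1 : HasDerivAt (fun t => C t ^ p)
          (-(S x ^ (p - 1)) * p * C x ^ (p - 1)) x := by
        have := ((hCdiff x).hasDerivAt).rpow_const (p := p) (Or.inr hp)
        rwa [hC' x hx'] at this
      have h2 : HasDerivAt (fun t => S t ^ p)
          (C x ^ (p - 1) * p * S x ^ (p - 1)) x := by
        have := ((hSdiff x).hasDerivAt).rpow_const (p := p) (Or.inr hp)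
        rwa [hS' x hx'] at this
      have h3 := h1.add h2
      have h4 : -(S x ^ (p - 1)) * p * C x ^ (p - 1) + C x ^ (p - 1) * p * S x ^ (p - 1)
          = 0 := by ring
      rw [h4] at h3
      exact h3.hasDerivWithinAt
  constructor
  · -- hard direction
    intro hEq
    by_contra hnot
    push_neg at hnot
    obtain ⟨hp1, hp2⟩ := hnot
    have hp1' : 1 < p := lt_of_le_of_ne hp (Ne.symm hp1)
    have hq0 : (0 : ℝ) < (p - 1) * p := mul_pos (by linarith) hp0
    set g : ℝ → ℝ := fun u => S u ^ ((n : ℝ) - 2) with hg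
    set w : ℝ → ℝ := fun u => (C u ^ ((p - 1) * p) + S u ^ ((p - 1) * p)) ^ (1 / p) with hw
    have hn2 : (0 : ℝ) ≤ (n : ℝ) - 2 := by
      have : (2 : ℝ) ≤ (n : ℝ) := by exact_mod_cast hn
      linarith
    have hgc : Continuous g := (Real.continuous_rpow_const hn2).comp hSc
    have hwc : Continuous w :=
      (Real.continuous_rpow_const (by positivity)).comp
        (((Real.continuous_rpow_const hq0.le).comp hCc).add
          ((Real.continuous_rpow_const hq0.le).comp hSc))
    -- S is monotone on [0,T]
    have hSmono : MonotoneOn S (Set.Icc 0 T) := by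
      apply monotoneOn_of_deriv_nonneg (convex_Icc 0 T) hSc.continuousOn
        hSdiff.differentiableOn
      intro x hx
      rw [interior_Icc] at hx
      rw [hS' x (Set.Ioo_subset_Icc_self hx)]
      exact Real.rpow_nonneg (hCnn x (Set.Ioo_subset_Icc_self hx)) _
    -- C positive near 0
    have h01 : (0 : ℝ) < C 0 := by rw [hC0]; norm_num
    have hev : ∀ᶠ u in nhds (0 : ℝ), 0 < C u :=
      hCc.continuousAt.eventually (eventually_gt_nhds h01)
    obtain ⟨ε, hε0, hball⟩ := Metric.eventually_nhds_iff.mp hev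
    set t₁ : ℝ := min ε T / 2 with ht₁def
    have hmin0 : 0 < min ε T := lt_min hε0 hT
    have ht₁0 : 0 < t₁ := by positivity
    have ht₁T : t₁ < T := by
      have : t₁ < min ε T := by rw [ht₁def]; linarith
      exact lt_of_lt_of_le this (min_le_right _ _)
    have hCpos : ∀ u ∈ Set.Icc (0 : ℝ) t₁, 0 < C u := by
      intro u hu
      apply hball
      rw [Real.dist_eq, sub_zero, abs_of_nonneg hu.1]
      have h1 : t₁ < ε := by
        have := min_le_left ε T
        rw [ht₁def]; linarith
      linarith [hu.2]
    -- S strictly increasing on [0, t₁]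
    have hSsm : StrictMonoOn S (Set.Icc 0 t₁) := by
      apply strictMonoOn_of_deriv_pos (convex_Icc 0 t₁) hSc.continuousOn
      intro x hx
      rw [interior_Icc] at hx
      have hxT : x ∈ Set.Icc (0 : ℝ) T :=
        ⟨hx.1.le, le_trans hx.2.le (le_of_lt ht₁T)⟩
      rw [hS' x hxT]
      exact Real.rpow_pos_of_pos (hCpos x ⟨hx.1.le, hx.2.le⟩) _
    have hSt₁ : 0 < S t₁ := by
      have := hSsm (Set.left_mem_Icc.mpr ht₁0.le) (Set.right_mem_Icc.mpr ht₁0.le) ht₁0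
      rwa [hS0] at this
    have hSpos : ∀ u, 0 < u → u ≤ T → 0 < S u := by
      intro u h0 huT
      rcases le_or_gt t₁ u with h | h
      · exact lt_of_lt_of_le hSt₁
          (hSmono ⟨ht₁0.le, ht₁T.le⟩ ⟨h0.le, huT⟩ h)
      · have := hSsm (Set.left_mem_Icc.mpr ht₁0.le) ⟨h0.le, h.le⟩ h0
        rwa [hS0] at this
    have hgpos : ∀ u, 0 < u → u ≤ T → 0 < g u := fun u h0 huT =>
      Real.rpow_pos_of_pos (hSpos u h0 huT) _
    have hVT : 0 < V T := by
      rw [hV T]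
      exact intervalIntegral_pos_of_pos_on (hgc.intervalIntegrable 0 T)
        (fun x hx => hgpos x hx.1 hx.2.le) hT
    -- derivatives of V and Surf
    have hVd : ∀ t : ℝ, HasDerivAt V (g t) t := by
      intro t
      have hfun : V = fun s => ∫ u in (0 : ℝ)..s, g u := funext hV
      rw [hfun]
      exact intervalIntegral.integral_hasDerivAt_right (hgc.intervalIntegrable 0 t)
        (hgc.stronglyMeasurableAtFilter _ _) hgc.continuousAt
    have hSurfd : ∀ t : ℝ, HasDerivAt Surf (g t * w t) t := by
      intro t
      have hfun : Surf = fun s => ∫ u in (0 : ℝ)..s, g u * w u := funext hSurf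
      rw [hfun]
      exact intervalIntegral.integral_hasDerivAt_right ((hgc.mul hwc).intervalIntegrable 0 t)
        ((hgc.mul hwc).stronglyMeasurableAtFilter _ _) (hgc.mul hwc).continuousAt
    -- w is constant on (0,T)
    have hhconst : ∀ t ∈ Set.Ioo (0 : ℝ) T, w t * V T = Surf T := by
      intro t ht
      have hF : HasDerivAt (fun s => Surf s * V T - V s * Surf T)
          (g t * w t * V T - g t * Surf T) t :=
        ((hSurfd t).mul_const (V T)).sub ((hVd t).mul_const (Surf T))
      have hz : (fun s => Surf s * V T - V s * Surf T) =ᶠ[nhds t] fun _ => 0 := by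
        filter_upwards [Ioo_mem_nhds ht.1 ht.2] with s hs
        rw [hEq s (Set.Ioo_subset_Icc_self hs), sub_self]
      have h0 : HasDerivAt (fun _ : ℝ => (0 : ℝ)) (g t * w t * V T - g t * Surf T) t :=
        hF.congr_of_eventuallyEq hz.symm
      have huniq := h0.unique (hasDerivAt_const t (0 : ℝ))
      have hgt : g t ≠ 0 := (hgpos t ht.1 ht.2.le).ne'
      have h5 : g t * (w t * V T) = g t * Surf T := by
        have : g t * w t * V T = g t * Surf T := by linarith [huniq]
        linarith [this, mul_assoc (g t) (w t) (V T)]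
      exact mul_left_cancel₀ hgt h5
    -- limit at 0
    haveI hNB : (nhdsWithin (0 : ℝ) (Set.Ioo (0 : ℝ) T)).NeBot := by
      apply mem_closure_iff_nhdsWithin_neBot.mp
      rw [closure_Ioo hT.ne]
      exact ⟨le_refl 0, hT.le⟩
    have hlim1 : Tendsto w (nhdsWithin (0 : ℝ) (Set.Ioo (0 : ℝ) T)) (nhds (w 0)) :=
      hwc.continuousAt.continuousWithinAt
    have hlim2 : Tendsto w (nhdsWithin (0 : ℝ) (Set.Ioo (0 : ℝ) T))
        (nhds (Surf T / V T)) := by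
      apply Tendsto.congr' _ tendsto_const_nhds
      filter_upwards [self_mem_nhdsWithin] with s hs
      rw [eq_comm, eq_div_iff hVT.ne', mul_comm (w s) (V T), mul_comm]
      exact hhconst s hs
    have hw0 : w 0 = 1 := by
      rw [hw]
      simp only [hC0, hS0, Real.one_rpow, Real.zero_rpow hq0.ne', add_zero]
    have hw0eq : w 0 = Surf T / V T := tendsto_nhds_unique hlim1 hlim2
    have hSTVT : Surf T = V T := by
      rw [hw0] at hw0eq
      exact (div_eq_one_iff_eq hVT.ne').mp hw0eq.symm
    have hwt₁ : w t₁ = 1 := by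
      have h6 := hhconst t₁ ⟨ht₁0, ht₁T⟩
      rw [hSTVT] at h6
      have h7 : w t₁ * V T = 1 * V T := by rw [h6, one_mul]
      exact mul_right_cancel₀ hVT.ne' h7
    -- now derive the contradiction
    have hCt₁ : 0 < C t₁ := hCpos t₁ (Set.right_mem_Icc.mpr ht₁0.le)
    have ht₁Icc : t₁ ∈ Set.Icc (0 : ℝ) T := ⟨ht₁0.le, ht₁T.le⟩
    have ha0 : 0 < C t₁ ^ p := Real.rpow_pos_of_pos hCt₁ p
    have hb0 : 0 < S t₁ ^ p := Real.rpow_pos_of_pos hSt₁ p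
    have hab : C t₁ ^ p + S t₁ ^ p = 1 := key t₁ ht₁Icc
    have hr1 : p - 1 ≠ 1 := fun hc => hp2 (by linarith)
    have haux := aux_sum_ne_one ha0 hb0 hab (by linarith : (0 : ℝ) < p - 1) hr1
    have hCq : C t₁ ^ ((p - 1) * p) = (C t₁ ^ p) ^ (p - 1) := by
      rw [mul_comm, Real.rpow_mul (hCnn t₁ ht₁Icc)]
    have hSq : S t₁ ^ ((p - 1) * p) = (S t₁ ^ p) ^ (p - 1) := by
      rw [mul_comm, Real.rpow_mul (hSnn t₁ ht₁Icc)]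
    have hs0 : 0 < (C t₁ ^ p) ^ (p - 1) + (S t₁ ^ p) ^ (p - 1) :=
      add_pos (Real.rpow_pos_of_pos ha0 _) (Real.rpow_pos_of_pos hb0 _)
    have hws : ((C t₁ ^ p) ^ (p - 1) + (S t₁ ^ p) ^ (p - 1)) ^ (1 / p) = 1 := by
      simp only [hw] at hwt₁
      rw [hCq, hSq] at hwt₁
      exact hwt₁
    apply haux
    have hpow := congrArg (fun x : ℝ => x ^ p) hws
    rwa [← Real.rpow_mul hs0.le, one_div, inv_mul_cancel₀ hp0.ne', Real.rpow_one,
      Real.one_rpow] at hpow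
  · -- easy direction
    rintro (rfl | rfl) t ht
    · -- p = 1
      have hS2 : ∀ s : ℝ, Surf s = V s * 2 := by
        intro s
        rw [hSurf, hV]
        rw [show ((1 : ℝ) - 1) * 1 = 0 by norm_num]
        simp only [Real.rpow_zero]
        rw [show (1 : ℝ) / 1 = 1 by norm_num]
        simp only [Real.rpow_one]
        rw [show (1 : ℝ) + 1 = 2 by norm_num]
        exact intervalIntegral.integral_mul_const 2 _
      rw [hS2, hS2]; ring
    · -- p = 2
      have hS2 : ∀ s ∈ Set.Icc (0 : ℝ) T, Surf s = V s := by
        intro s hs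
        rw [hSurf, hV]
        apply intervalIntegral.integral_congr
        intro u hu
        rw [Set.uIcc_of_le hs.1] at hu
        have huT : u ∈ Set.Icc (0 : ℝ) T := ⟨hu.1, hu.2.trans hs.2⟩
        simp only
        rw [show ((2 : ℝ) - 1) * 2 = 2 by norm_num, key u huT, Real.one_rpow, mul_one]
      rw [hS2 t ht, hS2 T (Set.right_mem_Icc.mpr hT.le)]
end

section
/- Under the squigonometric hypotheses, let n ≥ 2 be a natural number and define V(t) := ∫₀^t S(u)^(n-2) du and Σ₂(t) := ∫₀^t S(u)^(n-2)·(C(u)^(2·(p-1)) + S(u)^(2·(p-1)))^(1/2) du for t ∈ [0,T]. Then the relative hyper-volume and the relative euclidean hyper-area agree, i.e. Σ₂(t)·V(T) = V(t)·Σ₂(T) for all t ∈ [0,T], if and only if p = 1 or p = 2. -/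
open Set Real intervalIntegral

/-- Under the squigonometric hypotheses, for `n ≥ 2`, the relative hyper-volume
`V(t) = ∫₀^t S^(n-2)` and the relative euclidean hyper-area
`Surf₂(t) = ∫₀^t S^(n-2)·(C^(2(p-1)) + S^(2(p-1)))^(1/2)` agree, i.e.
`Surf₂(t)·V(T) = V(t)·Surf₂(T)` on `[0,T]`, if and only if `p = 1` or `p = 2`. -/
theorem relative_volume_eq_relative_euclidean_area_iff
    (p T : ℝ) (C S : ℝ → ℝ)
    (hp : 1 ≤ p) (hT : 0 < T)
    (hCdiff : Differentiable ℝ C) (hSdiff : Differentiable ℝ S)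
    (hC' : ∀ t ∈ Set.Icc (0 : ℝ) T, deriv C t = -(S t ^ (p - 1)))
    (hS' : ∀ t ∈ Set.Icc (0 : ℝ) T, deriv S t = C t ^ (p - 1))
    (hCnn : ∀ t ∈ Set.Icc (0 : ℝ) T, 0 ≤ C t)
    (hSnn : ∀ t ∈ Set.Icc (0 : ℝ) T, 0 ≤ S t)
    (hC0 : C 0 = 1) (hS0 : S 0 = 0) (hCT : C T = 0)
    (n : ℕ) (hn : 2 ≤ n)
    (V Surf₂ : ℝ → ℝ)
    (hV : ∀ t : ℝ, V t = ∫ u in (0 : ℝ)..t, S u ^ ((n : ℝ) - 2))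
    (hSurf : ∀ t : ℝ, Surf₂ t = ∫ u in (0 : ℝ)..t,
        S u ^ ((n : ℝ) - 2) * (C u ^ (2 * (p - 1)) + S u ^ (2 * (p - 1))) ^ ((1 : ℝ) / 2)) :
    (∀ t ∈ Set.Icc (0 : ℝ) T, Surf₂ t * V T = V t * Surf₂ T) ↔ (p = 1 ∨ p = 2) := by
  have hp0 : (0:ℝ) < p := lt_of_lt_of_le one_pos hp
  have hn2 : (0:ℝ) ≤ (n:ℝ) - 2 := by
    have : (2:ℝ) ≤ (n:ℝ) := by exact_mod_cast hn
    linarith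
  have hCcont : Continuous C := hCdiff.continuous
  have hScont : Continuous S := hSdiff.continuous
  -- Pythagorean identity
  have pyth : ∀ t ∈ Icc (0:ℝ) T, C t ^ p + S t ^ p = 1 := by
    have key := constant_of_has_deriv_right_zero
      (f := fun t => C t ^ p + S t ^ p) (a := (0:ℝ)) (b := T)
      (((hCcont.rpow_const fun x => Or.inr hp0.le).add
        (hScont.rpow_const fun x => Or.inr hp0.le)).continuousOn)
      (by
        intro x hx
        have hx' : x ∈ Icc (0:ℝ) T := ⟨hx.1, hx.2.le⟩
        have h1 : HasDerivAt (fun t => C t ^ p) (p * C x ^ (p-1) * deriv C x) x :=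
          (Real.hasDerivAt_rpow_const (Or.inr hp)).comp x (hCdiff x).hasDerivAt
        have h2 : HasDerivAt (fun t => S t ^ p) (p * S x ^ (p-1) * deriv S x) x :=
          (Real.hasDerivAt_rpow_const (Or.inr hp)).comp x (hSdiff x).hasDerivAt
        have h3 := h1.add h2
        rw [hC' x hx', hS' x hx'] at h3
        have h4 : HasDerivAt (fun t => C t ^ p + S t ^ p) 0 x := by
          have e : p * C x ^ (p - 1) * -S x ^ (p - 1) + p * S x ^ (p - 1) * C x ^ (p - 1) = 0 := by ring
          rw [e] at h3; exact h3
        exact h4.hasDerivWithinAt)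
    intro t ht
    have := key t ht
    simp only [hC0, hS0, Real.one_rpow, Real.zero_rpow hp0.ne'] at this
    linarith
  -- value of S at T
  have hST : S T = 1 := by
    have hSTp : S T ^ p = 1 := by
      have := pyth T ⟨hT.le, le_refl T⟩
      rw [hCT, Real.zero_rpow hp0.ne'] at this
      linarith
    rcases lt_trichotomy (S T) 1 with h | h | h
    · have := Real.rpow_lt_one (hSnn T ⟨hT.le, le_refl T⟩) h hp0
      linarith
    · exact h
    · have := (Real.one_lt_rpow_iff_of_pos (lt_trans one_pos h) (y := p)).mpr (Or.inl ⟨h, hp0⟩)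
      linarith
  -- intermediate point where C = S
  obtain ⟨t₀, ht₀, hgt₀⟩ : ∃ t₀ ∈ Ioo (0:ℝ) T, C t₀ - S t₀ = 0 := by
    have hsub : (0:ℝ) ∈ Ioo (C T - S T) (C 0 - S 0) := by
      rw [hCT, hST, hC0, hS0]; norm_num
    have := intermediate_value_Ioo' hT.le ((hCcont.sub hScont).continuousOn) hsub
    obtain ⟨x, hx, hfx⟩ := this
    exact ⟨x, hx, hfx⟩
  have hCS : C t₀ = S t₀ := by linarith
  have ht₀I : t₀ ∈ Icc (0:ℝ) T := ⟨ht₀.1.le, ht₀.2.le⟩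
  have hSt₀ : 0 < S t₀ := by
    rcases lt_or_eq_of_le (hSnn t₀ ht₀I) with h | h
    · exact h
    · exfalso
      have := pyth t₀ ht₀I
      rw [hCS, ← h, Real.zero_rpow hp0.ne'] at this
      norm_num at this
  have h2Sp : 2 * S t₀ ^ p = 1 := by
    have := pyth t₀ ht₀I
    rw [hCS] at this
    linarith
  -- continuity of the integrands
  have hfVc : Continuous fun u => S u ^ ((n:ℝ)-2) := hScont.rpow_const fun x => Or.inr hn2
  have hq2 : (0:ℝ) ≤ 2*(p-1) := by linarith
  have hwc : Continuous fun u => (C u ^ (2*(p-1)) + S u ^ (2*(p-1))) ^ ((1:ℝ)/2) :=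
    ((hCcont.rpow_const fun x => Or.inr hq2).add
      (hScont.rpow_const fun x => Or.inr hq2)).rpow_const fun x => Or.inr (by norm_num)
  have hfAc : Continuous fun u =>
      S u ^ ((n:ℝ)-2) * (C u ^ (2*(p-1)) + S u ^ (2*(p-1))) ^ ((1:ℝ)/2) := hfVc.mul hwc
  have hVfun : V = fun t => ∫ u in (0:ℝ)..t, S u ^ ((n:ℝ)-2) := funext hV
  have hSfun : Surf₂ = fun t => ∫ u in (0:ℝ)..t,
      S u ^ ((n:ℝ)-2) * (C u ^ (2*(p-1)) + S u ^ (2*(p-1))) ^ ((1:ℝ)/2) := funext hSurf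
  constructor
  · intro H
    by_cases hp1 : p = 1
    · exact Or.inl hp1
    right
    -- pointwise relation in the interior
    have key2 : ∀ t ∈ Ioo (0:ℝ) T,
        S t ^ ((n:ℝ)-2) * (C t ^ (2*(p-1)) + S t ^ (2*(p-1))) ^ ((1:ℝ)/2) * V T
          = S t ^ ((n:ℝ)-2) * Surf₂ T := by
      intro t ht
      have hmem : Icc (0:ℝ) T ∈ nhds t := Icc_mem_nhds ht.1 ht.2
      have hev : (fun t => Surf₂ t * V T - V t * Surf₂ T) =ᶠ[nhds t] fun _ => (0:ℝ) :=
        Filter.eventuallyEq_of_mem hmem (fun x hx => by simp [H x hx])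
      have hdV : HasDerivAt V (S t ^ ((n:ℝ)-2)) t := by
        rw [hVfun]; exact (hfVc.integral_hasStrictDerivAt 0 t).hasDerivAt
      have hdS : HasDerivAt Surf₂
          (S t ^ ((n:ℝ)-2) * (C t ^ (2*(p-1)) + S t ^ (2*(p-1))) ^ ((1:ℝ)/2)) t := by
        rw [hSfun]; exact (hfAc.integral_hasStrictDerivAt 0 t).hasDerivAt
      have hD : HasDerivAt (fun t => Surf₂ t * V T - V t * Surf₂ T)
          (S t ^ ((n:ℝ)-2) * (C t ^ (2*(p-1)) + S t ^ (2*(p-1))) ^ ((1:ℝ)/2) * V T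
            - S t ^ ((n:ℝ)-2) * Surf₂ T) t :=
        (hdS.mul_const _).sub (hdV.mul_const _)
      have h0 : deriv (fun t => Surf₂ t * V T - V t * Surf₂ T) t = 0 := by
        rw [hev.deriv_eq]; exact deriv_const t 0
      have := hD.deriv
      rw [h0] at this
      linarith
    -- extend to T by continuity
    have keyT : S T ^ ((n:ℝ)-2) * (C T ^ (2*(p-1)) + S T ^ (2*(p-1))) ^ ((1:ℝ)/2) * V T
        = S T ^ ((n:ℝ)-2) * Surf₂ T := by
      have hc1 : Continuous fun t =>
          S t ^ ((n:ℝ)-2) * (C t ^ (2*(p-1)) + S t ^ (2*(p-1))) ^ ((1:ℝ)/2) * V T :=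
        (hfAc.mul continuous_const)
      have hc2 : Continuous fun t => S t ^ ((n:ℝ)-2) * Surf₂ T := (hfVc.mul continuous_const)
      have hEq := Set.EqOn.closure (fun x hx => key2 x hx) hc1 hc2
      have hTmem : T ∈ closure (Ioo (0:ℝ) T) := by
        rw [closure_Ioo hT.ne]; exact ⟨hT.le, le_refl T⟩
      exact hEq hTmem
    have h2p : 2*(p-1) ≠ 0 := by
      intro h; apply hp1; linarith [mul_eq_zero.mp h]
    have h2p' : p - 1 ≠ 0 := fun h => hp1 (by linarith)
    have hVS : V T = Surf₂ T := by
      rw [hCT, hST, Real.zero_rpow h2p, Real.one_rpow, Real.one_rpow, zero_add,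
        Real.one_rpow, one_mul, one_mul] at keyT
      linarith
    -- monotonicity of S and positivity of V T
    have hmono : MonotoneOn S (Icc (0:ℝ) T) := by
      apply monotoneOn_of_deriv_nonneg (convex_Icc 0 T) hScont.continuousOn
        (hSdiff.differentiableOn.mono interior_subset)
      intro x hx
      rw [interior_Icc] at hx
      rw [hS' x ⟨hx.1.le, hx.2.le⟩]
      exact Real.rpow_nonneg (hCnn x ⟨hx.1.le, hx.2.le⟩) _
    have hVpos : 0 < V T := by
      rw [hV T, ← intervalIntegral.integral_add_adjacent_intervals
        (hfVc.intervalIntegrable 0 t₀) (hfVc.intervalIntegrable t₀ T)]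
      have h1 : 0 ≤ ∫ u in (0:ℝ)..t₀, S u ^ ((n:ℝ)-2) :=
        intervalIntegral.integral_nonneg ht₀.1.le
          (fun u hu => Real.rpow_nonneg (hSnn u ⟨hu.1, hu.2.trans ht₀.2.le⟩) _)
      have h2 : 0 < ∫ u in t₀..T, S u ^ ((n:ℝ)-2) := by
        apply intervalIntegral.intervalIntegral_pos_of_pos_on
          (hfVc.intervalIntegrable t₀ T) _ ht₀.2
        intro x hx
        have hxI : x ∈ Icc (0:ℝ) T := ⟨ht₀.1.le.trans hx.1.le, hx.2.le⟩
        have : S t₀ ≤ S x := hmono ht₀I hxI hx.1.le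
        exact Real.rpow_pos_of_pos (lt_of_lt_of_le hSt₀ this) _
      linarith
    have hS₂pos : 0 < Surf₂ T := hVS ▸ hVpos
    have hfVt₀ : 0 < S t₀ ^ ((n:ℝ)-2) := Real.rpow_pos_of_pos hSt₀ _
    have hwt₀ : (C t₀ ^ (2*(p-1)) + S t₀ ^ (2*(p-1))) ^ ((1:ℝ)/2) = 1 := by
      have h := key2 t₀ ht₀
      rw [hVS] at h
      have h' : S t₀ ^ ((n:ℝ)-2) * (C t₀ ^ (2*(p-1)) + S t₀ ^ (2*(p-1))) ^ ((1:ℝ)/2)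
          = S t₀ ^ ((n:ℝ)-2) := mul_right_cancel₀ hS₂pos.ne' h
      exact mul_left_cancel₀ hfVt₀.ne' (by rw [mul_one]; exact h')
    have hsq : 2 * S t₀ ^ (2*(p-1)) = 1 := by
      have hx : C t₀ ^ (2*(p-1)) + S t₀ ^ (2*(p-1)) = 2 * S t₀ ^ (2*(p-1)) := by
        rw [hCS]; ring
      have hnn : (0:ℝ) ≤ 2 * S t₀ ^ (2*(p-1)) := by positivity
      have h1 : (2 * S t₀ ^ (2*(p-1))) ^ ((1:ℝ)/2) = 1 := by rw [← hx]; exact hwt₀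
      have h2 := congrArg (fun y : ℝ => y ^ (2:ℝ)) h1
      simp only [Real.one_rpow] at h2
      rw [← Real.rpow_mul hnn] at h2
      norm_num at h2
      exact h2
    have hs1 : S t₀ ≠ 1 := by
      intro h; rw [h, Real.one_rpow] at h2Sp; norm_num at h2Sp
    have hexp : S t₀ ^ (2*(p-1)) = S t₀ ^ p := by linarith
    have hlog := congrArg Real.log hexp
    rw [Real.log_rpow hSt₀, Real.log_rpow hSt₀] at hlog
    have hlogne : Real.log (S t₀) ≠ 0 := by
      intro h
      rcases Real.log_eq_zero.mp h with h | h | h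
      · linarith
      · exact hs1 h
      · linarith
    have : 2*(p-1) = p := mul_right_cancel₀ hlogne hlog
    linarith
  · rintro (h1 | h2) t ht
    · subst h1
      have hc : ∀ t : ℝ, Surf₂ t = V t * (2:ℝ) ^ ((1:ℝ)/2) := by
        intro t
        rw [hSurf t, hV t, ← intervalIntegral.integral_mul_const]
        apply intervalIntegral.integral_congr
        intro u _
        norm_num
      rw [hc t, hc T]; ring
    · subst h2
      have hSeq : ∀ t ∈ Icc (0:ℝ) T, Surf₂ t = V t := by
        intro t ht
        rw [hSurf t, hV t]
        apply intervalIntegral.integral_congr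
        intro u hu
        have hu' : u ∈ Icc (0:ℝ) T := by
          rw [Set.uIcc_of_le ht.1] at hu
          exact ⟨hu.1, hu.2.trans ht.2⟩
        have hpy := pyth u hu'
        show S u ^ ((n:ℝ)-2) * (C u ^ ((2:ℝ)*(2-1)) + S u ^ ((2:ℝ)*(2-1))) ^ ((1:ℝ)/2) = S u ^ ((n:ℝ)-2)
        rw [show (2:ℝ)*(2-1) = 2 by norm_num, hpy, Real.one_rpow, mul_one]
      rw [hSeq t ht, hSeq T ⟨hT.le, le_refl T⟩]
end

section
/- Under the squigonometric hypotheses, for every natural number n ≥ 2, the Lebesgue measure in ℝⁿ of the unit p-ball {x ∈ ℝⁿ : ∑_{i=1}^n |x_i|^p ≤ 1} equals (2^n / n) · ∏_{k=0}^{n-2} ∫₀^T S(t)^k dt. -/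
open MeasureTheory intervalIntegral Set Pointwise

namespace SquigVolAux
variable {p T : ℝ} {C S : ℝ → ℝ}


lemma pyth
    (hp : 1 ≤ p)
    (hCdiff : Differentiable ℝ C) (hSdiff : Differentiable ℝ S)
    (hC' : ∀ t ∈ Set.Icc (0 : ℝ) T, deriv C t = -(S t ^ (p - 1)))
    (hS' : ∀ t ∈ Set.Icc (0 : ℝ) T, deriv S t = C t ^ (p - 1))
    (hC0 : C 0 = 1) (hS0 : S 0 = 0) :
    ∀ t ∈ Set.Icc (0 : ℝ) T, C t ^ p + S t ^ p = 1 := by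
  have hp0 : (0:ℝ) < p := lt_of_lt_of_le one_pos hp
  have hcont : ContinuousOn (fun u => C u ^ p + S u ^ p) (Set.Icc 0 T) :=
    (((Real.continuous_rpow_const hp0.le).comp hCdiff.continuous).add
      ((Real.continuous_rpow_const hp0.le).comp hSdiff.continuous)).continuousOn
  have key := constant_of_has_deriv_right_zero (f := fun u => C u ^ p + S u ^ p) hcont ?_
  · intro t ht
    have := key t ht
    simpa [hC0, hS0, Real.one_rpow, Real.zero_rpow hp0.ne'] using this
  · intro x hx
    have hx' : x ∈ Set.Icc (0:ℝ) T := Set.mem_Icc_of_Ico hx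
    have h1 : HasDerivAt (fun u => C u ^ p) (p * C x ^ (p-1) * deriv C x) x := by
      simpa [mul_assoc, Function.comp_def] using
        (Real.hasDerivAt_rpow_const (x := C x) (p := p) (Or.inr hp)).comp x
          (hCdiff x).hasDerivAt
    have h2 : HasDerivAt (fun u => S u ^ p) (p * S x ^ (p-1) * deriv S x) x := by
      simpa [mul_assoc, Function.comp_def] using
        (Real.hasDerivAt_rpow_const (x := S x) (p := p) (Or.inr hp)).comp x
          (hSdiff x).hasDerivAt
    have h3 := h1.add h2
    rw [hC' x hx', hS' x hx'] at h3
    have : p * C x ^ (p-1) * -(S x ^ (p-1)) + p * S x ^ (p-1) * (C x ^ (p-1)) = 0 := by ring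
    rw [this] at h3
    exact h3.hasDerivWithinAt

lemma reduction
    (hp : 1 ≤ p) (hT : 0 < T)
    (hCdiff : Differentiable ℝ C) (hSdiff : Differentiable ℝ S)
    (hC' : ∀ t ∈ Set.Icc (0 : ℝ) T, deriv C t = -(S t ^ (p - 1)))
    (hS' : ∀ t ∈ Set.Icc (0 : ℝ) T, deriv S t = C t ^ (p - 1))
    (hCnn : ∀ t ∈ Set.Icc (0 : ℝ) T, 0 ≤ C t)
    (hSnn : ∀ t ∈ Set.Icc (0 : ℝ) T, 0 ≤ S t)
    (hpyth : ∀ t ∈ Set.Icc (0 : ℝ) T, C t ^ p + S t ^ p = 1)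
    (hS0 : S 0 = 0) (hCT : C T = 0)
    (n : ℕ) (hn : 1 ≤ n) :
    ((n:ℝ)+1) * ∫ t in (0:ℝ)..T, S t ^ ((n:ℝ) + p - 1)
      = (n:ℝ) * ∫ t in (0:ℝ)..T, S t ^ ((n:ℝ) - 1) := by
  have hp0 : (0:ℝ) < p := lt_of_lt_of_le one_pos hp
  have hn1 : (1:ℝ) ≤ (n:ℝ) := by exact_mod_cast hn
  have hSc : Continuous S := hSdiff.continuous
  have hCc : Continuous C := hCdiff.continuous
  have cS : ∀ q : ℝ, 0 ≤ q → Continuous (fun t => S t ^ q) := fun q hq =>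
    (Real.continuous_rpow_const hq).comp hSc
  have cC : ∀ q : ℝ, 0 ≤ q → Continuous (fun t => C t ^ q) := fun q hq =>
    (Real.continuous_rpow_const hq).comp hCc
  set g : ℝ → ℝ := fun x =>
    ((n:ℝ) * S x ^ ((n:ℝ)-1) * (C x ^ (p-1))) * C x + S x ^ (n:ℝ) * (-(S x ^ (p-1)))
    with hg
  have hgc : Continuous g := by
    apply Continuous.add
    · exact (((continuous_const.mul (cS _ (by linarith))).mul (cC _ (by linarith))).mul hCc)
    · exact (cS _ (by linarith)).mul ((cS _ (by linarith)).neg)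
  have huIcc : Set.uIcc (0:ℝ) T = Set.Icc 0 T := Set.uIcc_of_le hT.le
  have hFTC : ∫ x in (0:ℝ)..T, g x
      = S T ^ (n:ℝ) * C T - S 0 ^ (n:ℝ) * C 0 := by
    apply integral_eq_sub_of_hasDerivAt
    · intro x hx
      rw [huIcc] at hx
      have h1 : HasDerivAt (fun u => S u ^ (n:ℝ))
          ((n:ℝ) * S x ^ ((n:ℝ)-1) * deriv S x) x := by
        simpa [mul_assoc, Function.comp_def] using
          (Real.hasDerivAt_rpow_const (x := S x) (p := (n:ℝ)) (Or.inr hn1)).comp x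
            (hSdiff x).hasDerivAt
      have h2 : HasDerivAt C (deriv C x) x := (hCdiff x).hasDerivAt
      have h3 := h1.mul h2
      rw [hS' x hx, hC' x hx] at h3
      exact h3
    · exact hgc.intervalIntegrable _ _
  rw [hCT, hS0, Real.zero_rpow (by positivity), mul_zero, zero_mul, sub_zero] at hFTC
  have hcongr : ∫ x in (0:ℝ)..T, g x
      = ∫ x in (0:ℝ)..T, ((n:ℝ) * S x ^ ((n:ℝ)-1) - ((n:ℝ)+1) * S x ^ ((n:ℝ)+p-1)) := by
    apply integral_congr
    intro x hx
    rw [huIcc] at hx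
    have hSx := hSnn x hx
    have hCx := hCnn x hx
    have hpp : p - 1 + 1 = p := by ring
    have e1 : C x ^ (p - 1) * C x = C x ^ p := by
      have h := Real.rpow_add' hCx (y := p-1) (z := 1) (by rw [hpp]; exact hp0.ne')
      rw [hpp, Real.rpow_one] at h
      exact h.symm
    have hnp : (n:ℝ) - 1 + p = (n:ℝ) + p - 1 := by ring
    have e2 : S x ^ ((n:ℝ)-1) * S x ^ p = S x ^ ((n:ℝ)+p-1) := by
      have h := Real.rpow_add' hSx (y := (n:ℝ)-1) (z := p) (by rw [hnp]; exact ne_of_gt (by linarith))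
      rw [hnp] at h
      exact h.symm
    have hnp2 : (n:ℝ) + (p - 1) = (n:ℝ) + p - 1 := by ring
    have e3 : S x ^ ((n:ℝ)) * S x ^ (p-1) = S x ^ ((n:ℝ)+p-1) := by
      have h := Real.rpow_add' hSx (y := (n:ℝ)) (z := p-1) (by rw [hnp2]; exact ne_of_gt (by linarith))
      rw [hnp2] at h
      exact h.symm
    have cp' : C x ^ p = 1 - S x ^ p := by linarith [hpyth x hx]
    show g x = _
    simp only [hg]
    linear_combination ((n:ℝ) * S x ^ ((n:ℝ)-1)) * e1 + ((n:ℝ) * S x ^ ((n:ℝ)-1)) * cp'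
      - (n:ℝ) * e2 - e3
  rw [hcongr] at hFTC
  rw [integral_sub (f := fun x => (n:ℝ) * S x ^ ((n:ℝ)-1))
      (g := fun x => ((n:ℝ)+1) * S x ^ ((n:ℝ)+p-1)) (((continuous_const.mul (cS _ (by linarith))).intervalIntegrable _ _))
      (((continuous_const.mul (cS _ (by linarith))).intervalIntegrable _ _)),
    intervalIntegral.integral_const_mul, intervalIntegral.integral_const_mul] at hFTC
  linarith

lemma subst
    (hp : 1 ≤ p) (hT : 0 < T)
    (hCdiff : Differentiable ℝ C) (hSdiff : Differentiable ℝ S)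
    (hC' : ∀ t ∈ Set.Icc (0 : ℝ) T, deriv C t = -(S t ^ (p - 1)))
    (hCnn : ∀ t ∈ Set.Icc (0 : ℝ) T, 0 ≤ C t)
    (hSnn : ∀ t ∈ Set.Icc (0 : ℝ) T, 0 ≤ S t)
    (hpyth : ∀ t ∈ Set.Icc (0 : ℝ) T, C t ^ p + S t ^ p = 1)
    (hC0 : C 0 = 1) (hCT : C T = 0)
    (n : ℕ) (hn : 1 ≤ n) :
    ∫ x in (0:ℝ)..1, (1 - x ^ p) ^ ((n:ℝ)/p)
      = ∫ t in (0:ℝ)..T, S t ^ ((n:ℝ) + p - 1) := by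
  have hp0 : (0:ℝ) < p := lt_of_lt_of_le one_pos hp
  have hn0 : (0:ℝ) < (n:ℝ) := by exact_mod_cast hn
  have hSc : Continuous S := hSdiff.continuous
  have huIcc : Set.uIcc T (0:ℝ) = Set.Icc 0 T := Set.uIcc_comm T 0 ▸ Set.uIcc_of_le hT.le
  have hgcont : Continuous (fun x : ℝ => (1 - x ^ p) ^ ((n:ℝ)/p)) := by
    exact (Real.continuous_rpow_const (by positivity)).comp
      (continuous_const.sub (Real.continuous_rpow_const hp0.le))
  have key := integral_comp_smul_deriv (f := C) (f' := fun t => -(S t ^ (p-1)))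
    (g := fun x : ℝ => (1 - x ^ p) ^ ((n:ℝ)/p)) (a := T) (b := 0)
    (fun x hx => by
      rw [huIcc] at hx
      have := (hCdiff x).hasDerivAt
      rwa [hC' x hx] at this)
    (by
      rw [huIcc]
      exact (((Real.continuous_rpow_const (by linarith)).comp hSc).neg).continuousOn)
    hgcont
  rw [hCT, hC0] at key
  -- key : ∫ t in T..0, (-(S t ^ (p-1))) • g (C t) = ∫ x in 0..1, g x
  rw [← key, integral_symm, ← intervalIntegral.integral_neg]
  apply integral_congr
  intro t ht
  rw [Set.uIcc_comm, huIcc] at ht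
  have hSt := hSnn t ht
  have e1 : (1 - C t ^ p) = S t ^ p := by linarith [hpyth t ht]
  have e2 : (S t ^ p) ^ ((n:ℝ)/p) = S t ^ (n:ℝ) := by
    rw [← Real.rpow_mul hSt]
    congr 1
    field_simp
  have hnp : p - 1 + (n:ℝ) = (n:ℝ) + p - 1 := by ring
  have e3 : S t ^ (p-1) * S t ^ (n:ℝ) = S t ^ ((n:ℝ)+p-1) := by
    have h := Real.rpow_add' hSt (y := p-1) (z := (n:ℝ)) (by rw [hnp]; exact ne_of_gt (by linarith))
    rw [hnp] at h
    exact h.symm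
  show -((-(S t ^ (p-1))) • (fun x : ℝ => (1 - x ^ p) ^ ((n:ℝ)/p)) (C t)) = _
  simp only [smul_eq_mul, Function.comp]
  rw [e1, e2]
  rw [← e3]
  ring

lemma contsum (p : ℝ) (hp0 : 0 < p) (m : ℕ) :
    Continuous (fun x : Fin m → ℝ => ∑ i, |x i| ^ p) := by
  apply continuous_finset_sum
  intro i _
  exact (Real.continuous_rpow_const hp0.le).comp ((continuous_apply i).abs)

lemma step (p : ℝ) (hp : 1 ≤ p) (n : ℕ) (hn : 1 ≤ n) :
    MeasureTheory.volume {x : Fin (n+1) → ℝ | ∑ i, |x i| ^ p ≤ 1}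
      = ENNReal.ofReal (2 * ∫ x in (0:ℝ)..1, (1 - x ^ p) ^ ((n:ℝ)/p)) *
        MeasureTheory.volume {x : Fin n → ℝ | ∑ i, |x i| ^ p ≤ 1} := by
  have hp0 : (0:ℝ) < p := lt_of_lt_of_le one_pos hp
  set Bn : Set (Fin n → ℝ) := {x | ∑ i, |x i| ^ p ≤ 1} with hBn
  have hBnm : MeasurableSet Bn :=
    (isClosed_le (contsum p hp0 n) continuous_const).measurableSet
  set s : Set (ℝ × (Fin n → ℝ)) := {q | |q.1| ^ p + ∑ i, |q.2 i| ^ p ≤ 1} with hs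
  have hsm : MeasurableSet s := by
    apply isClosed_le _ continuous_const |>.measurableSet
    exact ((Real.continuous_rpow_const hp0.le).comp continuous_fst.abs).add
      ((contsum p hp0 n).comp continuous_snd)
  have hA : {x : Fin (n+1) → ℝ | ∑ i, |x i| ^ p ≤ 1}
      = (MeasurableEquiv.piFinSuccAbove (fun _ : Fin (n+1) => ℝ) 0) ⁻¹' s := by
    ext x
    simp only [Set.mem_setOf_eq, Set.mem_preimage, MeasurableEquiv.piFinSuccAbove,
      MeasurableEquiv.coe_mk, Fin.insertNthEquiv]
    rw [Fin.sum_univ_succ]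
    simp [Fin.succAbove_zero, hs, Fin.tail]
  rw [hA, (volume_preserving_piFinSuccAbove (fun _ : Fin (n+1) => ℝ) 0).measure_preimage
    hsm.nullMeasurableSet]
  rw [Measure.volume_eq_prod, Measure.prod_apply hsm]
  set G : ℝ → ℝ := fun x => (1 - |x| ^ p) ^ ((n:ℝ)/p) with hG
  have hGcont : Continuous G :=
    (Real.continuous_rpow_const (by positivity)).comp
      (continuous_const.sub ((Real.continuous_rpow_const hp0.le).comp continuous_abs))
  -- pointwise slice volume
  have slice : ∀ x : ℝ, volume (Prod.mk x ⁻¹' s)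
      = (Set.indicator (Set.Icc (-1:ℝ) 1) (fun x => ENNReal.ofReal (G x)) x) * volume Bn := by
    intro x
    rcases le_or_gt |x| 1 with hx1 | hx1
    · have hxmem : x ∈ Set.Icc (-1:ℝ) 1 := abs_le.mp hx1
      rw [Set.indicator_of_mem hxmem]
      have h1x : 0 ≤ 1 - |x| ^ p := by
        have : |x| ^ p ≤ 1 := Real.rpow_le_one (abs_nonneg x) hx1 hp0.le
        linarith
      set r : ℝ := (1 - |x| ^ p) ^ (p⁻¹) with hr
      have hr0 : 0 ≤ r := Real.rpow_nonneg h1x _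
      have hrp : r ^ p = 1 - |x| ^ p := Real.rpow_inv_rpow h1x hp0.ne'
      have hset : Prod.mk x ⁻¹' s = r • Bn := by
        rcases eq_or_lt_of_le hr0 with hr0' | hrpos
        · -- r = 0
          have h0 : 1 - |x| ^ p = 0 := by rw [← hrp, ← hr0', Real.zero_rpow hp0.ne']
          have hBne : (0 : Fin n → ℝ) ∈ Bn := by
            simp [hBn, Real.zero_rpow hp0.ne']
          rw [← hr0', Set.zero_smul_set ⟨0, hBne⟩]
          ext y
          simp only [Set.mem_preimage, hs, Set.mem_setOf_eq, Set.mem_zero]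
          constructor
          · intro hy
            have hsum : ∑ i, |y i| ^ p ≤ 0 := by linarith
            have hzero : ∀ i ∈ Finset.univ, |y i| ^ p = 0 := by
              rw [← Finset.sum_eq_zero_iff_of_nonneg
                (fun i _ => Real.rpow_nonneg (abs_nonneg _) p)]
              exact le_antisymm hsum (Finset.sum_nonneg
                (fun i _ => Real.rpow_nonneg (abs_nonneg _) p))
            funext i
            have h := hzero i (Finset.mem_univ i)
            rw [Real.rpow_eq_zero_iff_of_nonneg (abs_nonneg _)] at h
            simpa using h.1
          · rintro rfl
            simp [Real.zero_rpow hp0.ne']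
            linarith
        · -- r > 0
          ext y
          rw [Set.mem_smul_set_iff_inv_smul_mem₀ hrpos.ne']
          simp only [Set.mem_preimage, hs, hBn, Set.mem_setOf_eq, Pi.smul_apply,
            smul_eq_mul]
          have key : ∀ i : Fin n, |r⁻¹ * y i| ^ p = (r ^ p)⁻¹ * |y i| ^ p := by
            intro i
            rw [abs_mul, abs_of_pos (inv_pos.mpr hrpos),
              Real.mul_rpow (inv_nonneg.mpr hr0) (abs_nonneg _),
              Real.inv_rpow hr0]
          simp_rw [key]
          rw [← Finset.mul_sum, inv_mul_le_iff₀ (Real.rpow_pos_of_pos hrpos p), mul_one, hrp]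
          constructor <;> intro h <;> linarith
      rw [hset, Measure.addHaar_smul_of_nonneg volume hr0, Module.finrank_fin_fun]
      congr 1
      rw [← Real.rpow_natCast r n, hr, ← Real.rpow_mul h1x]
      simp only [hG]
      congr 1
      field_simp
    · have hempty : Prod.mk x ⁻¹' s = ∅ := by
        ext y
        simp only [Set.mem_preimage, hs, Set.mem_setOf_eq, Set.mem_empty_iff_false, iff_false,
          not_le]
        have h1 : 1 < |x| ^ p :=
          (Real.one_lt_rpow_iff_of_pos (lt_trans one_pos hx1)).mpr (Or.inl ⟨hx1, hp0⟩)
        have h2 : 0 ≤ ∑ i, |y i| ^ p :=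
          Finset.sum_nonneg (fun i _ => Real.rpow_nonneg (abs_nonneg _) p)
        linarith
      have hxnot : x ∉ Set.Icc (-1:ℝ) 1 := fun hmem => absurd (abs_le.mpr hmem) (not_le.mpr hx1)
      rw [hempty, measure_empty, Set.indicator_of_notMem hxnot, zero_mul]
  rw [lintegral_congr slice]
  have hGm : Measurable fun x => ENNReal.ofReal (G x) :=
    ENNReal.measurable_ofReal.comp hGcont.measurable
  rw [lintegral_mul_const _ (hGm.indicator measurableSet_Icc),
    lintegral_indicator measurableSet_Icc]
  have hint : IntegrableOn G (Set.Icc (-1:ℝ) 1) volume := hGcont.integrableOn_Icc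
  rw [← ofReal_integral_eq_lintegral_ofReal hint ?nn]
  case nn =>
    filter_upwards [ae_restrict_mem measurableSet_Icc] with x hx
    exact Real.rpow_nonneg (by
      have : |x| ^ p ≤ 1 := Real.rpow_le_one (abs_nonneg x) (abs_le.mpr hx) hp0.le
      linarith) _
  congr 1
  have e0 : ∫ x in Set.Icc (-1:ℝ) 1, G x = ∫ x in (-1:ℝ)..1, G x := by
    rw [intervalIntegral.integral_of_le (by norm_num), integral_Icc_eq_integral_Ioc]
  have hi1 : IntervalIntegrable G volume (-1) 0 := hGcont.intervalIntegrable _ _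
  have hi2 : IntervalIntegrable G volume 0 1 := hGcont.intervalIntegrable _ _
  have e1 : (∫ x in (-1:ℝ)..0, G x) + ∫ x in (0:ℝ)..1, G x = ∫ x in (-1:ℝ)..1, G x :=
    integral_add_adjacent_intervals hi1 hi2
  have e2 : ∫ x in (-1:ℝ)..0, G x = ∫ x in (0:ℝ)..1, G x := by
    have h := intervalIntegral.integral_comp_neg (a := (0:ℝ)) (b := 1) G
    simp only [neg_zero, neg_neg] at h
    rw [← h]
    apply integral_congr
    intro x _
    simp [hG, abs_neg]
  have e3 : ∫ x in (0:ℝ)..1, G x = ∫ x in (0:ℝ)..1, (1 - x ^ p) ^ ((n:ℝ)/p) := by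
    apply integral_congr
    intro x hx
    rw [Set.uIcc_of_le (by norm_num : (0:ℝ) ≤ 1)] at hx
    simp [hG, abs_of_nonneg hx.1]
  rw [e0, ← e1, e2, e3]
  ring

lemma base (p : ℝ) (hp : 1 ≤ p) :
    MeasureTheory.volume {x : Fin 1 → ℝ | ∑ i, |x i| ^ p ≤ 1} = ENNReal.ofReal 2 := by
  have hp0 : (0:ℝ) < p := lt_of_lt_of_le one_pos hp
  have hA : {x : Fin 1 → ℝ | ∑ i, |x i| ^ p ≤ 1}
      = (MeasurableEquiv.funUnique (Fin 1) ℝ) ⁻¹' (Set.Icc (-1:ℝ) 1) := by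
    ext x
    simp only [Set.mem_setOf_eq, Fin.sum_univ_one, Set.mem_preimage,
      MeasurableEquiv.funUnique, MeasurableEquiv.coe_mk, Equiv.funUnique_apply,
      Set.mem_Icc]
    rw [← abs_le]
    constructor
    · intro h
      by_contra hc
      push_neg at hc
      exact absurd h (not_le.mpr
        ((Real.one_lt_rpow_iff_of_pos (lt_trans one_pos hc)).mpr (Or.inl ⟨hc, hp0⟩)))
    · intro h
      exact Real.rpow_le_one (abs_nonneg _) h hp0.le
  erw [hA, (volume_preserving_funUnique (Fin 1) ℝ).measure_preimage
    measurableSet_Icc.nullMeasurableSet, Real.volume_Icc]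
  norm_num
end SquigVolAux

/-- Under the squigonometric hypotheses, the Lebesgue measure of the unit
`p`-ball in `ℝⁿ` equals `(2^n / n) · ∏_{k=0}^{n-2} ∫₀^T S(t)^k dt`. -/
theorem volume_unit_p_ball
    (p T : ℝ) (C S : ℝ → ℝ)
    (hp : 1 ≤ p) (hT : 0 < T)
    (hCdiff : Differentiable ℝ C) (hSdiff : Differentiable ℝ S)
    (hC' : ∀ t ∈ Set.Icc (0 : ℝ) T, deriv C t = -(S t ^ (p - 1)))
    (hS' : ∀ t ∈ Set.Icc (0 : ℝ) T, deriv S t = C t ^ (p - 1))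
    (hCnn : ∀ t ∈ Set.Icc (0 : ℝ) T, 0 ≤ C t)
    (hSnn : ∀ t ∈ Set.Icc (0 : ℝ) T, 0 ≤ S t)
    (hC0 : C 0 = 1) (hS0 : S 0 = 0) (hCT : C T = 0) :
    ∀ n : ℕ, 2 ≤ n →
      MeasureTheory.volume {x : Fin n → ℝ | ∑ i, |x i| ^ p ≤ 1}
        = ENNReal.ofReal ((2 ^ n / (n : ℝ)) *
            ∏ k ∈ Finset.range (n - 1), ∫ t in (0 : ℝ)..T, S t ^ (k : ℝ)) := by
  have hp0 : (0:ℝ) < p := lt_of_lt_of_le one_pos hp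
  have hpyth := SquigVolAux.pyth hp hCdiff hSdiff hC' hS' hC0 hS0
  have hJnn : ∀ q : ℝ, 0 ≤ ∫ t in (0:ℝ)..T, S t ^ q := fun q =>
    intervalIntegral.integral_nonneg hT.le (fun u hu => Real.rpow_nonneg (hSnn u hu) q)
  have main : ∀ m : ℕ, 1 ≤ m →
      MeasureTheory.volume {x : Fin m → ℝ | ∑ i, |x i| ^ p ≤ 1}
        = ENNReal.ofReal ((2 ^ m / (m : ℝ)) *
            ∏ k ∈ Finset.range (m - 1), ∫ t in (0 : ℝ)..T, S t ^ (k : ℝ)) := by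
    intro m hm
    induction m, hm using Nat.le_induction with
    | base =>
      rw [SquigVolAux.base p hp]
      norm_num
    | succ m hm ih =>
      rw [SquigVolAux.step p hp m hm, ih]
      have hsub := SquigVolAux.subst hp hT hCdiff hSdiff hC' hCnn hSnn hpyth hC0 hCT m hm
      have hred := SquigVolAux.reduction hp hT hCdiff hSdiff hC' hS' hCnn hSnn hpyth hS0 hCT m hm
      have hm1 : (0:ℝ) < (m:ℝ) := by exact_mod_cast hm
      rw [hsub]
      have hJ : ∫ t in (0:ℝ)..T, S t ^ ((m:ℝ) + p - 1)
          = ((m:ℝ)/((m:ℝ)+1)) * ∫ t in (0:ℝ)..T, S t ^ ((m:ℝ) - 1) := by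
        have h1 : ((m:ℝ)+1) ≠ 0 := by positivity
        field_simp
        linear_combination hred
      rw [hJ, ← ENNReal.ofReal_mul
        (mul_nonneg (by norm_num) (mul_nonneg (by positivity) (hJnn _)))]
      congr 1
      obtain ⟨m', rfl⟩ : ∃ m', m = m' + 1 := ⟨m - 1, by omega⟩
      have ecast : ((m' + 1 : ℕ):ℝ) - 1 = ((m' : ℕ):ℝ) := by push_cast; ring
      rw [ecast]
      simp only [Nat.add_sub_cancel]
      rw [Finset.prod_range_succ]
      have h1 : ((m':ℝ)+1) ≠ 0 := by positivity
      have h2 : ((m':ℝ)+1+1) ≠ 0 := by positivity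
      push_cast
      field_simp
      ring
  exact fun n hn => main n (by omega)
end

section
/- Let p > 0 be a real number and let f : ℝ → ℝ be continuous with f(0) ≠ 0. Suppose there exists g : ℝ → ℝ such that f(x)·f(y) = g((|x|^p + |y|^p)^(1/p)) for all x, y ∈ ℝ. Then there exists a constant c ∈ ℝ such that f(x) = f(0)·exp(c·|x|^p) for all x ∈ ℝ. -/
/-!
Putting `y = 0` shows `g z = f z * f 0` for `z ≥ 0`, so `φ t = f (t ^ (1 / p)) / f 0` satisfies
`φ (s + t) = φ s * φ t` on `[0, ∞)`. A solution continuous on `[0, ∞)` with `φ 0 = 1` is positive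
there, since `φ t = φ (t / n) ^ n` and `φ ≠ 0` near `0`; so `log ∘ φ` is additive on `[0, ∞)`.
Extended by `x ↦ L x⁺ - L x⁻` it becomes a continuous additive map on `ℝ`, hence linear, and
`φ t = exp (c * t)`. Finally `f x = f |x| = f 0 * φ (|x| ^ p)`.
-/

open Real Set Filter Topology

section CauchyOnNonneg

variable {φ : ℝ → ℝ}

lemma map_nat_mul_of_map_add_eq_mul (h0 : φ 0 = 1)
    (hmul : ∀ s t, 0 ≤ s → 0 ≤ t → φ (s + t) = φ s * φ t) {t : ℝ} (ht : 0 ≤ t) (n : ℕ) :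
    φ (n * t) = φ t ^ n := by
  induction n with
  | zero => simpa using h0
  | succ n ih =>
    rw [Nat.cast_succ, add_one_mul, hmul _ _ (by positivity) ht, ih, pow_succ]

lemma pos_of_map_add_eq_mul (hφ : ContinuousOn φ (Ici 0)) (h0 : φ 0 = 1)
    (hmul : ∀ s t, 0 ≤ s → 0 ≤ t → φ (s + t) = φ s * φ t) {t : ℝ} (ht : 0 ≤ t) :
    0 < φ t := by
  have hpow (n : ℕ) : φ t = φ (t / (n + 1)) ^ (n + 1) := by
    rw [← map_nat_mul_of_map_add_eq_mul h0 hmul (by positivity)]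
    push_cast
    field_simp
  have hlim : Tendsto (fun n : ℕ ↦ t / (n + 1)) atTop (𝓝[Ici 0] 0) :=
    tendsto_nhdsWithin_iff.2
      ⟨by simpa [div_eq_mul_inv] using tendsto_one_div_add_atTop_nhds_zero_nat.const_mul t,
      Eventually.of_forall fun n ↦ div_nonneg ht n.cast_add_one_pos.le⟩
  obtain ⟨n, hn⟩ :=
    (hlim.eventually ((hφ 0 self_mem_Ici).eventually_ne (h0 ▸ one_ne_zero))).exists
  refine lt_of_le_of_ne ?_ (hpow n ▸ pow_ne_zero _ hn).symm
  rw [hpow 1]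
  exact even_two.pow_nonneg _

lemma eq_mul_of_map_add_of_nonneg {L : ℝ → ℝ} (hL : ContinuousOn L (Ici 0))
    (hadd : ∀ s t, 0 ≤ s → 0 ≤ t → L (s + t) = L s + L t) {t : ℝ} (ht : 0 ≤ t) :
    L t = t * L 1 := by
  have hL0 : L 0 = 0 := by simpa using hadd 0 0 le_rfl le_rfl
  have hadd₃ {a b c : ℝ} (ha : 0 ≤ a) (hb : 0 ≤ b) (hc : 0 ≤ c) :
      L (a + b + c) = L a + L b + L c := by
    rw [hadd _ _ (by positivity) hc, hadd _ _ ha hb]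
  let A : ℝ →+ ℝ := AddMonoidHom.mk' (fun x ↦ L x⁺ - L x⁻) fun x y ↦ by
    have key : L ((x + y)⁺ + x⁻ + y⁻) = L ((x + y)⁻ + x⁺ + y⁺) := by
      congr 1
      linarith [posPart_sub_negPart x, posPart_sub_negPart y, posPart_sub_negPart (x + y)]
    simp only [hadd₃, posPart_nonneg, negPart_nonneg] at key
    linarith
  have hA : Continuous A :=
    (hL.comp_continuous continuous_posPart fun x ↦ posPart_nonneg x).sub
      (hL.comp_continuous continuous_negPart fun x ↦ negPart_nonneg x)
  have hAL {x : ℝ} (hx : 0 ≤ x) : A x = L x := by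
    simp [A, posPart_eq_self.2 hx, negPart_eq_zero.2 hx, hL0]
  rw [← hAL ht, ← hAL zero_le_one, ← smul_eq_mul, ← map_real_smul A hA, smul_eq_mul, mul_one]

lemma exists_eq_exp_mul_of_map_add_eq_mul (hφ : ContinuousOn φ (Ici 0)) (h0 : φ 0 = 1)
    (hmul : ∀ s t, 0 ≤ s → 0 ≤ t → φ (s + t) = φ s * φ t) :
    ∃ c, ∀ t, 0 ≤ t → φ t = exp (c * t) := by
  have hpos {t : ℝ} (ht : 0 ≤ t) : 0 < φ t := pos_of_map_add_eq_mul hφ h0 hmul ht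
  have hlog : ContinuousOn (fun t ↦ log (φ t)) (Ici 0) :=
    hφ.log fun t ht ↦ (hpos ht).ne'
  refine ⟨log (φ 1), fun t ht ↦ ?_⟩
  rw [mul_comm, ← eq_mul_of_map_add_of_nonneg hlog (fun s t hs ht ↦ ?_) ht, exp_log (hpos ht)]
  rw [hmul s t hs ht, log_mul (hpos hs).ne' (hpos ht).ne']

end CauchyOnNonneg

lemma mul_eq_apply_pNorm_mul_apply_zero {p : ℝ} (hp : p ≠ 0) {f g : ℝ → ℝ}
    (hg : ∀ x y : ℝ, f x * f y = g ((|x| ^ p + |y| ^ p) ^ (1 / p))) (x y : ℝ) :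
    f x * f y = f ((|x| ^ p + |y| ^ p) ^ (1 / p)) * f 0 := by
  set z := (|x| ^ p + |y| ^ p) ^ (1 / p)
  have hz : 0 ≤ z := by positivity
  have hz0 : (|z| ^ p + |0| ^ p) ^ (1 / p) = z := by
    rw [abs_zero, zero_rpow hp, add_zero, abs_of_nonneg hz, one_div, rpow_rpow_inv hz hp]
  rw [hg, hg z 0, hz0]

/-- A continuous density `f` with `f 0 ≠ 0` whose independent product
`f(x)·f(y)` is a function of the `p`-norm `(|x|^p + |y|^p)^(1/p)` alone must be
of the `p`-normal form `f(x) = f(0)·exp(c·|x|^p)`. -/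
theorem p_isotropic_product_is_p_normal
    (p : ℝ) (hp : 0 < p) (f : ℝ → ℝ) (hf : Continuous f) (hf0 : f 0 ≠ 0)
    (h : ∃ g : ℝ → ℝ, ∀ x y : ℝ, f x * f y = g ((|x| ^ p + |y| ^ p) ^ (1 / p))) :
    ∃ c : ℝ, ∀ x : ℝ, f x = f 0 * Real.exp (c * |x| ^ p) := by
  obtain ⟨g, hg⟩ := h
  have hfg := mul_eq_apply_pNorm_mul_apply_zero hp.ne' hg
  have habs_rpow_inv {t : ℝ} (ht : 0 ≤ t) : |t ^ (1 / p)| ^ p = t := by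
    rw [abs_of_nonneg (by positivity), one_div, rpow_inv_rpow ht hp.ne']
  have hrpow_inv {t : ℝ} (ht : 0 ≤ t) : (t ^ p) ^ (1 / p) = t := by
    rw [one_div, rpow_rpow_inv ht hp.ne']
  obtain ⟨c, hc⟩ := exists_eq_exp_mul_of_map_add_eq_mul (φ := fun t ↦ f (t ^ (1 / p)) / f 0)
    ((hf.comp (continuous_rpow_const (by positivity))).div_const _).continuousOn
    (by simp only [zero_rpow (one_div_ne_zero hp.ne'), div_self hf0])
    (fun s t hs ht ↦ by
      rw [div_mul_div_comm, hfg, habs_rpow_inv hs, habs_rpow_inv ht, mul_div_mul_right _ _ hf0])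
  refine ⟨c, fun x ↦ ?_⟩
  have hx : f x * f 0 = f |x| * f 0 := by
    rw [hfg, abs_zero, zero_rpow hp.ne', add_zero, hrpow_inv (abs_nonneg x)]
  rw [← hc _ (by positivity), hrpow_inv (abs_nonneg x), mul_right_cancel₀ hf0 hx]
  field_simp
end

section
/- Let f, g : ℝ → ℝ satisfy f(x)·f(y) = g(max(|x|, |y|)) for all x, y ∈ ℝ. If f(y₀) ≠ 0 for some y₀ ∈ ℝ, then f(x) = f(y₀) for every x with |x| ≤ |y₀|. -/
/-- The `p = ∞` case: if `f(x)·f(y) = g(max(|x|,|y|))` for all `x, y`, then `f`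
is constant on every symmetric interval on which it is nonzero. -/
theorem chebyshev_isotropic_product_is_constant
    (f g : ℝ → ℝ) (h : ∀ x y : ℝ, f x * f y = g (max |x| |y|))
    (y₀ : ℝ) (hy₀ : f y₀ ≠ 0) :
    ∀ x : ℝ, |x| ≤ |y₀| → f x = f y₀ := by
  intro x hx
  refine mul_right_cancel₀ hy₀ ?_
  calc f x * f y₀ = g (max |x| |y₀|) := h x y₀
    _ = g (max |y₀| |y₀|) := by rw [max_eq_right hx, max_self]
    _ = f y₀ * f y₀ := (h y₀ y₀).symm
end

section
/- Let n ≥ 1 be a natural number and p > 0 a real number. Let μ be the measure on ℝⁿ with density x ↦ exp(-(∑_{i=1}^n |x_i|^p)/p) with respect to Lebesgue measure, and let Vₙ denote the Lebesgue measure of the unit p-ball {x ∈ ℝⁿ : ∑_{i=1}^n |x_i|^p ≤ 1}. Then the pushforward of μ under the map x ↦ (∑_{i=1}^n |x_i|^p)^(1/p) equals the measure on ℝ with density r ↦ n·Vₙ·r^(n-1)·exp(-r^p/p) on (0,∞) (and zero density on (-∞,0]) with respect to Lebesgue measure. -/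
open MeasureTheory Set Real
open scoped ENNReal Pointwise

private lemma map_withDensity_comp {α β : Type*} [MeasurableSpace α] [MeasurableSpace β]
    (μ : Measure α) {g : α → β} (hg : Measurable g) {f : β → ℝ≥0∞} (hf : Measurable f) :
    Measure.map g (μ.withDensity (f ∘ g)) = (Measure.map g μ).withDensity f := by
  ext s hs
  rw [Measure.map_apply hg hs, withDensity_apply _ hs, withDensity_apply _ (hg hs),
    setLIntegral_map hs hf hg]
  rfl

private lemma map_radius (n : ℕ) (hn : 1 ≤ n) (p : ℝ) (hp : 0 < p) :
    Measure.map (fun x : Fin n → ℝ => (∑ i, |x i| ^ p) ^ (1 / p)) volume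
      = volume.withDensity (fun r : ℝ =>
          if 0 < r then
            ENNReal.ofReal ((n : ℝ) *
              (volume {x : Fin n → ℝ | ∑ i, |x i| ^ p ≤ 1}).toReal * r ^ ((n : ℝ) - 1))
          else 0) := by
  have hn0 : (n : ℝ) ≠ 0 := Nat.cast_ne_zero.mpr (by omega)
  have hn1 : (1 : ℝ) ≤ (n : ℝ) := by exact_mod_cast hn
  set S : (Fin n → ℝ) → ℝ := fun x => ∑ i, |x i| ^ p with hSdef
  have hS0 : ∀ x, 0 ≤ S x := fun x =>
    Finset.sum_nonneg fun i _ => Real.rpow_nonneg (abs_nonneg _) p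
  have hSmeas : Measurable S :=
    Finset.measurable_sum _ fun i _ =>
      (Real.continuous_rpow_const hp.le).measurable.comp (measurable_pi_apply i).abs
  set g : (Fin n → ℝ) → ℝ := fun x => S x ^ (1 / p) with hgdef
  have hg : Measurable g :=
    (Real.continuous_rpow_const (by positivity)).measurable.comp hSmeas
  set B : Set (Fin n → ℝ) := {x | S x ≤ 1} with hBdef
  set V : ℝ≥0∞ := volume B with hVdef
  -- V is finite
  have hVfin : V ≠ ∞ := by
    have hsub : B ⊆ Set.pi Set.univ fun _ : Fin n => Icc (-1 : ℝ) 1 := by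
      intro x hx i _
      have h1 : |x i| ^ p ≤ S x := Finset.single_le_sum
        (fun j _ => Real.rpow_nonneg (abs_nonneg _) p) (Finset.mem_univ i)
      have h2 : |x i| ^ p ≤ (1 : ℝ) ^ p := by
        rw [Real.one_rpow]; exact h1.trans hx
      have := (Real.rpow_le_rpow_iff (abs_nonneg _) zero_le_one hp).mp h2
      constructor <;> [linarith [neg_abs_le (x i)]; linarith [le_abs_self (x i)]]
    refine ne_of_lt (lt_of_le_of_lt (measure_mono hsub) ?_)
    rw [volume_pi_pi]
    exact ENNReal.prod_lt_top (fun i _ => by simp [Real.volume_Icc])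
  haveI : Nonempty (Fin n) := ⟨⟨0, by omega⟩⟩
  -- g x = 0 iff x = 0
  have hg_eq_zero : ∀ x, g x ≤ 0 → x = 0 := by
    intro x hx
    have hgx : g x = 0 := le_antisymm hx (Real.rpow_nonneg (hS0 x) _)
    have hSx : S x = 0 := ((Real.rpow_eq_zero_iff_of_nonneg (hS0 x)).mp hgx).1
    funext i
    have h1 := (Finset.sum_eq_zero_iff_of_nonneg
      (fun j _ => Real.rpow_nonneg (abs_nonneg (x j)) p)).mp hSx i (Finset.mem_univ i)
    have h2 := (Real.rpow_eq_zero_iff_of_nonneg (abs_nonneg (x i))).mp h1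
    simpa using abs_eq_zero.mp h2.1
  -- measure of sublevel sets of g
  have hmap_le : ∀ c : ℝ, c ≤ 0 → Measure.map g volume (Iic c) = 0 := by
    intro c hc
    rw [Measure.map_apply hg measurableSet_Iic]
    refine measure_mono_null (fun x hx => ?_) (measure_singleton (0 : Fin n → ℝ))
    exact hg_eq_zero x (le_trans hx hc)
  have hmap_pos : ∀ c : ℝ, 0 < c →
      Measure.map g volume (Iic c) = ENNReal.ofReal (c ^ n) * V := by
    intro c hc
    rw [Measure.map_apply hg measurableSet_Iic]
    have hcp : 0 < c ^ p := Real.rpow_pos_of_pos hc p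
    have hset : g ⁻¹' Iic c = c • B := by
      ext x
      simp only [mem_preimage, mem_Iic]
      rw [Set.mem_smul_set_iff_inv_smul_mem₀ hc.ne']
      have hSsmul : S (c⁻¹ • x) = (c ^ p)⁻¹ * S x := by
        calc S (c⁻¹ • x) = ∑ i, c⁻¹ ^ p * |x i| ^ p := Finset.sum_congr rfl fun i _ => by
              rw [Pi.smul_apply, smul_eq_mul, abs_mul, abs_of_nonneg (inv_nonneg.2 hc.le),
                Real.mul_rpow (inv_nonneg.2 hc.le) (abs_nonneg _)]
          _ = (c ^ p)⁻¹ * S x := by rw [← Finset.mul_sum, Real.inv_rpow hc.le]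
      constructor
      · intro h
        simp only [hBdef, mem_setOf_eq, hSsmul]
        rw [inv_mul_le_iff₀ hcp, mul_one]
        calc S x = (S x ^ (1/p)) ^ p := by
              rw [← Real.rpow_mul (hS0 x), one_div_mul_cancel hp.ne', Real.rpow_one]
          _ ≤ c ^ p := Real.rpow_le_rpow (Real.rpow_nonneg (hS0 x) _) h hp.le
      · intro h
        simp only [hBdef, mem_setOf_eq, hSsmul] at h
        rw [inv_mul_le_iff₀ hcp, mul_one] at h
        calc g x = (S x) ^ (1/p) := rfl
          _ ≤ (c ^ p) ^ (1/p) := Real.rpow_le_rpow (hS0 x) h (by positivity)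
          _ = c := by
              rw [← Real.rpow_mul hc.le, mul_one_div, div_self hp.ne', Real.rpow_one]
    rw [hset, Measure.addHaar_smul_of_nonneg volume hc.le B, Module.finrank_fin_fun]
  -- the density measure
  set ν : Measure ℝ := volume.withDensity (fun r : ℝ =>
      if 0 < r then ENNReal.ofReal ((n : ℝ) * V.toReal * r ^ ((n : ℝ) - 1)) else 0) with hνdef
  have hν_le : ∀ c : ℝ, c ≤ 0 → ν (Iic c) = 0 := by
    intro c hc
    rw [hνdef, withDensity_apply _ measurableSet_Iic]
    rw [setLIntegral_congr_fun measurableSet_Iic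
      (fun r (hr : r ≤ c) => if_neg (by linarith))]
    simp
  have hν_pos : ∀ c : ℝ, 0 < c → ν (Iic c) = ENNReal.ofReal (c ^ n) * V := by
    intro c hc
    rw [hνdef, withDensity_apply _ measurableSet_Iic, ← Iic_union_Ioc_eq_Iic hc.le,
      lintegral_union measurableSet_Ioc (Iic_disjoint_Ioc le_rfl)]
    have h1 : ∫⁻ r in Iic (0:ℝ),
        (if 0 < r then ENNReal.ofReal ((n : ℝ) * V.toReal * r ^ ((n : ℝ) - 1)) else 0) = 0 := by
      rw [setLIntegral_congr_fun measurableSet_Iic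
        (fun r (hr : r ≤ 0) => if_neg (by linarith))]
      simp
    have h2 : ∫⁻ r in Ioc (0:ℝ) c,
        (if 0 < r then ENNReal.ofReal ((n : ℝ) * V.toReal * r ^ ((n : ℝ) - 1)) else 0)
        = ∫⁻ r in Ioc (0:ℝ) c, ENNReal.ofReal ((n : ℝ) * V.toReal * r ^ ((n : ℝ) - 1)) :=
      setLIntegral_congr_fun measurableSet_Ioc
        (fun r hr => if_pos hr.1)
    rw [h1, h2, zero_add]
    have hint : IntegrableOn (fun r : ℝ => (n : ℝ) * V.toReal * r ^ ((n : ℝ) - 1))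
        (Ioc 0 c) volume := by
      have := (intervalIntegral.intervalIntegrable_rpow (μ := volume) (r := (n : ℝ) - 1) (a := 0) (b := c)
        (Or.inl (by linarith))).1
      exact this.const_mul _
    rw [← ofReal_integral_eq_lintegral_ofReal hint
      ((ae_restrict_mem measurableSet_Ioc).mono (fun r hr => by
        have h0r : (0:ℝ) ≤ r := hr.1.le
        positivity))]
    have hcalc : ∫ r in Ioc (0:ℝ) c, (n : ℝ) * V.toReal * r ^ ((n : ℝ) - 1) ∂volume
        = V.toReal * c ^ n := by
      rw [← intervalIntegral.integral_of_le hc.le, intervalIntegral.integral_const_mul,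
        integral_rpow (Or.inl (by linarith))]
      rw [sub_add_cancel, Real.zero_rpow hn0, sub_zero, Real.rpow_natCast]
      field_simp
    rw [hcalc, ENNReal.ofReal_mul (ENNReal.toReal_nonneg), ENNReal.ofReal_toReal hVfin]
    ring
  -- finiteness on Iic
  have hfinIic : ∀ c : ℝ, Measure.map g volume (Iic c) ≠ ∞ := by
    intro c
    rcases le_or_gt c 0 with hc | hc
    · rw [hmap_le c hc]; simp
    · rw [hmap_pos c hc]
      exact ENNReal.mul_ne_top ENNReal.ofReal_ne_top hVfin
  have hIic : ∀ c : ℝ, Measure.map g volume (Iic c) = ν (Iic c) := by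
    intro c
    rcases le_or_gt c 0 with hc | hc
    · rw [hmap_le c hc, hν_le c hc]
    · rw [hmap_pos c hc, hν_pos c hc]
  refine Measure.ext_of_Ioc' _ _ (fun a b hab => ?_) (fun a b hab => ?_)
  · exact fun h => hfinIic b (top_le_iff.mp (h ▸ measure_mono Ioc_subset_Iic_self))
  · rw [← Iic_sdiff_Iic,
      measure_diff (Iic_subset_Iic.2 hab.le) nullMeasurableSet_Iic (hfinIic a),
      measure_diff (Iic_subset_Iic.2 hab.le) nullMeasurableSet_Iic (hIic a ▸ hfinIic a),
      hIic a, hIic b]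

/-- Density of the `p`-radius of a vector with i.i.d. `p`-normal-type coordinates:
the pushforward of the measure with density `exp(-(∑|xᵢ|^p)/p)` on `ℝⁿ` under
`x ↦ (∑|xᵢ|^p)^(1/p)` has density `n·Vₙ·r^(n-1)·exp(-r^p/p)` on `(0,∞)`, where `Vₙ`
is the Lebesgue measure of the unit `p`-ball. -/
theorem p_radius_density
    (n : ℕ) (hn : 1 ≤ n) (p : ℝ) (hp : 0 < p) :
    MeasureTheory.Measure.map
        (fun x : Fin n → ℝ => (∑ i, |x i| ^ p) ^ (1 / p))
        (MeasureTheory.volume.withDensity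
          (fun x : Fin n → ℝ => ENNReal.ofReal (Real.exp (-(∑ i, |x i| ^ p) / p))))
      = MeasureTheory.volume.withDensity
          (fun r : ℝ =>
            if 0 < r then
              ENNReal.ofReal ((n : ℝ) *
                (MeasureTheory.volume {x : Fin n → ℝ | ∑ i, |x i| ^ p ≤ 1}).toReal *
                r ^ ((n : ℝ) - 1) * Real.exp (-(r ^ p) / p))
            else 0) := by
  have hS0 : ∀ x : Fin n → ℝ, (0:ℝ) ≤ ∑ i, |x i| ^ p := fun x =>
    Finset.sum_nonneg fun i _ => Real.rpow_nonneg (abs_nonneg _) p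
  have hSmeas : Measurable (fun x : Fin n → ℝ => ∑ i, |x i| ^ p) :=
    Finset.measurable_sum _ fun i _ =>
      (Real.continuous_rpow_const hp.le).measurable.comp (measurable_pi_apply i).abs
  have hg : Measurable (fun x : Fin n → ℝ => (∑ i, |x i| ^ p) ^ (1 / p)) :=
    (Real.continuous_rpow_const (by positivity)).measurable.comp hSmeas
  have hf : Measurable (fun r : ℝ => ENNReal.ofReal (Real.exp (-(r ^ p) / p))) := by
    apply Measurable.ennreal_ofReal
    exact Real.measurable_exp.comp
      (((Real.continuous_rpow_const hp.le).measurable.neg).div_const p)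
  have hdens : (fun x : Fin n → ℝ => ENNReal.ofReal (Real.exp (-(∑ i, |x i| ^ p) / p)))
      = (fun r : ℝ => ENNReal.ofReal (Real.exp (-(r ^ p) / p)))
        ∘ (fun x : Fin n → ℝ => (∑ i, |x i| ^ p) ^ (1 / p)) := by
    funext x
    simp only [Function.comp_apply]
    rw [← Real.rpow_mul (hS0 x), one_div_mul_cancel hp.ne', Real.rpow_one]
  rw [hdens, map_withDensity_comp _ hg hf, map_radius n hn p hp, ← withDensity_mul _ ?_ hf]
  · congr 1
    funext r
    by_cases hr : 0 < r
    · simp only [Pi.mul_apply, if_pos hr]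
      rw [← ENNReal.ofReal_mul (by positivity)]
    · simp only [Pi.mul_apply, if_neg hr, zero_mul]
  · exact Measurable.ite measurableSet_Ioi
      ((measurable_const.mul ((Real.continuous_rpow_const (by
        have : (1:ℝ) ≤ (n:ℝ) := by exact_mod_cast hn
        linarith)).measurable)).ennreal_ofReal) measurable_const
end
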